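/- arXiv:math/9905055 — 6 statements merged into one kernel-verified Lean document; each statement's English description precedes it below -/
import Mathlib

section
/- Let Q be an X-prime ideal of R, and let I and J be X-semiprime ideals of R such that IJ ⊆ Q. Then I ⊆ Q or J ⊆ Q. -/
/-- An ideal (i.e. left ideal) of a not-necessarily-commutative ring is two-sided. -/
def IsTwoSidedI {R : Type*} [Ring R] (I : Ideal R) : Prop :=
  ∀ a ∈ I, ∀ r : R, a * r ∈ I

/-- A (two-sided) ideal `P` is prime: it is proper and `IJ ⊆ P` forces `I ⊆ P` or `J ⊆ P`
for all two-sided ideals `I`, `J`. -/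
def IsPrimeTS {R : Type*} [Ring R] (P : Ideal R) : Prop :=
  IsTwoSidedI P ∧ P ≠ ⊤ ∧
    ∀ I J : Ideal R, IsTwoSidedI I → IsTwoSidedI J →
      (∀ a ∈ I, ∀ b ∈ J, a * b ∈ P) → I ≤ P ∨ J ≤ P

/-- `J` is `X`-semiprime: an intersection of a collection of `X`-prime ideals. -/
def IsXSemiprime {R : Type*} [Ring R] (𝒳 : Set (Ideal R)) (J : Ideal R) : Prop :=
  ∃ T ⊆ 𝒳, J = sInf T

/-- An intersection of two-sided ideals is two-sided. -/
lemma sInf_twoSided {R : Type*} [Ring R] (T : Set (Ideal R))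
    (h : ∀ K ∈ T, IsTwoSidedI K) : IsTwoSidedI (sInf T) := by
  intro a ha r
  rw [Submodule.mem_sInf] at ha ⊢
  intro p hp
  exact h p hp a (ha p hp) r

/-- In a (left) noetherian ring, any proper two-sided ideal is contained in a prime
(two-sided) ideal. -/
lemma exists_primeTS_ge {R : Type*} [Ring R] [IsNoetherianRing R]
    (Q : Ideal R) (hQts : IsTwoSidedI Q) (hQtop : Q ≠ ⊤) :
    ∃ M, IsPrimeTS M ∧ Q ≤ M := by
  -- take a maximal element of the set of proper two-sided ideals containing Q
  obtain ⟨M, hMS, hMmax⟩ :=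
    (set_has_maximal_iff_noetherian.mpr (inferInstance : IsNoetherian R R))
      {M : Ideal R | IsTwoSidedI M ∧ Q ≤ M ∧ M ≠ ⊤} ⟨Q, hQts, le_rfl, hQtop⟩
  obtain ⟨hMts, hQM, hMtop⟩ := hMS
  refine ⟨M, ⟨hMts, hMtop, ?_⟩, hQM⟩
  intro I' J' hI'ts hJ'ts hmul
  by_contra hcon
  push_neg at hcon
  obtain ⟨hIM, hJM⟩ := hcon
  -- M ⊔ I' is a two-sided ideal containing Q, strictly bigger than M, hence ⊤
  have hsupts : IsTwoSidedI (M ⊔ I') := by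
    intro a ha r
    rw [Submodule.mem_sup] at ha ⊢
    obtain ⟨m, hm, i, hi, rfl⟩ := ha
    exact ⟨m * r, hMts m hm r, i * r, hI'ts i hi r, (add_mul m i r).symm⟩
  have hsup_top : M ⊔ I' = ⊤ := by
    by_contra htop
    have : M ⊔ I' ∈ {M : Ideal R | IsTwoSidedI M ∧ Q ≤ M ∧ M ≠ ⊤} :=
      ⟨hsupts, hQM.trans le_sup_left, htop⟩
    have hnot := hMmax _ this
    have heq : M ⊔ I' = M := ((le_sup_left (b := I')).lt_or_eq.resolve_left hnot).symm
    exact hIM (heq ▸ (le_sup_right : I' ≤ M ⊔ I'))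
  -- write 1 = m + i and deduce J' ≤ M
  have h1 : (1 : R) ∈ M ⊔ I' := hsup_top ▸ Submodule.mem_top
  rw [Submodule.mem_sup] at h1
  obtain ⟨m, hm, i, hi, hmi⟩ := h1
  apply hJM
  intro b hb
  have : b = m * b + i * b := by
    rw [← add_mul, hmi, one_mul]
  rw [this]
  exact M.add_mem (hMts m hm b) (hmul i hi b hb)

/-- In a (left) noetherian ring, any proper two-sided ideal has a prime minimal over it. -/
lemma exists_minimal_primeTS {R : Type*} [Ring R] [IsNoetherianRing R]
    (Q : Ideal R) (hQts : IsTwoSidedI Q) (hQtop : Q ≠ ⊤) :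
    ∃ P, (IsPrimeTS P ∧ Q ≤ P) ∧ ∀ P', IsPrimeTS P' → Q ≤ P' → P' ≤ P → P' = P := by
  obtain ⟨M, hM, hQM⟩ := exists_primeTS_ge Q hQts hQtop
  -- Zorn's lemma downwards, in the order dual
  have := @zorn_le_nonempty₀ (Ideal R)ᵒᵈ _
    {P : (Ideal R)ᵒᵈ | IsPrimeTS (OrderDual.ofDual P) ∧ Q ≤ OrderDual.ofDual P}
    ?_ (OrderDual.toDual M) ⟨hM, hQM⟩
  · obtain ⟨P, -, ⟨hPprime, hQP⟩, hPmax⟩ := this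
    refine ⟨OrderDual.ofDual P, ⟨hPprime, hQP⟩, fun P' hP' hQP' hP'P => ?_⟩
    exact le_antisymm hP'P (hPmax ⟨hP', hQP'⟩ hP'P)
  · -- every nonempty chain of primes ⊇ Q has a lower bound: the intersection
    intro c hcs hchain y hy
    set P₀ : Ideal R := sInf (OrderDual.ofDual '' c) with hP₀
    have hP₀le : ∀ p ∈ c, P₀ ≤ OrderDual.ofDual p := fun p hp =>
      sInf_le ⟨p, hp, rfl⟩
    refine ⟨OrderDual.toDual P₀, ⟨⟨?_, ?_, ?_⟩, ?_⟩, fun z hz => hP₀le z hz⟩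
    · exact sInf_twoSided _ (by rintro K ⟨p, hp, rfl⟩; exact (hcs hp).1.1)
    · intro htop
      exact (hcs hy).1.2.1 (top_le_iff.mp (htop ▸ hP₀le y hy))
    · intro I' J' hI'ts hJ'ts hmul
      by_contra hcon
      push_neg at hcon
      obtain ⟨hIc, hJc⟩ := hcon
      -- find members of the chain avoiding I' resp. J'
      have hex : ∀ (K : Ideal R), ¬ K ≤ P₀ → ∃ p ∈ c, ¬ K ≤ OrderDual.ofDual p := by
        intro K hK
        by_contra h
        push_neg at h
        exact hK (le_sInf (by rintro _ ⟨p, hp, rfl⟩; exact h p hp))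
      obtain ⟨p₁, hp₁c, hp₁⟩ := hex I' hIc
      obtain ⟨p₂, hp₂c, hp₂⟩ := hex J' hJc
      rcases hchain.total hp₁c hp₂c with h12 | h21
      · -- in the dual, p₁ ≤ p₂ means p₂ ≤ p₁ as ideals
        rcases (hcs hp₂c).1.2.2 I' J' hI'ts hJ'ts
          (fun a ha b hb => hP₀le p₂ hp₂c (hmul a ha b hb)) with h | h
        · exact hp₁ (h.trans h12)
        · exact hp₂ h
      · rcases (hcs hp₁c).1.2.2 I' J' hI'ts hJ'ts
          (fun a ha b hb => hP₀le p₁ hp₁c (hmul a ha b hb)) with h | h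
        · exact hp₁ h
        · exact hp₂ (h.trans h21)
    · exact le_sInf (by rintro _ ⟨p, hp, rfl⟩; exact (hcs hp).2)

/-- Lemma 1.3: if `Q` is `X`-prime and `I`, `J` are `X`-semiprime with
`IJ ⊆ Q`, then `I ⊆ Q` or `J ⊆ Q`. -/
theorem stmt_0 {R : Type*} [Ring R] [IsNoetherianRing R] [IsNoetherianRing Rᵐᵒᵖ]
    (𝒳 : Set (Ideal R)) (h𝒳ne : 𝒳.Nonempty)
    (h𝒳ts : ∀ Q ∈ 𝒳, IsTwoSidedI Q)
    (q : Ideal R → Ideal R)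
    (ha : ∀ P : Ideal R, IsPrimeTS P →
      q P ∈ 𝒳 ∧ q P ≤ P ∧ ∀ J, IsXSemiprime 𝒳 J → J ≤ P → J ≤ q P)
    (hb : ∀ Q ∈ 𝒳, ∀ P : Ideal R, IsPrimeTS P → Q ≤ P →
      (∀ P', IsPrimeTS P' → Q ≤ P' → P' ≤ P → P' = P) → q P = Q)
    (Q : Ideal R) (hQ : Q ∈ 𝒳)
    (I J : Ideal R) (hI : IsXSemiprime 𝒳 I) (hJ : IsXSemiprime 𝒳 J)
    (hIJ : ∀ a ∈ I, ∀ b ∈ J, a * b ∈ Q) :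
    I ≤ Q ∨ J ≤ Q := by
  by_cases hQtop : Q = ⊤
  · left; rw [hQtop]; exact le_top
  have hQts : IsTwoSidedI Q := h𝒳ts Q hQ
  have hIts : IsTwoSidedI I := by
    obtain ⟨T, hT, rfl⟩ := hI
    exact sInf_twoSided T (fun K hK => h𝒳ts K (hT hK))
  have hJts : IsTwoSidedI J := by
    obtain ⟨T, hT, rfl⟩ := hJ
    exact sInf_twoSided T (fun K hK => h𝒳ts K (hT hK))
  obtain ⟨P, ⟨hPprime, hQP⟩, hPmin⟩ := exists_minimal_primeTS Q hQts hQtop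
  have hqP : q P = Q := hb Q hQ P hPprime hQP hPmin
  obtain ⟨-, -, hqmax⟩ := ha P hPprime
  rcases hPprime.2.2 I J hIts hJts (fun a ha b hb => hQP (hIJ a ha b hb)) with h | h
  · left; rw [← hqP]; exact hqmax I hI h
  · right; rw [← hqP]; exact hqmax J hJ h
end

section
/- Let U be a closed subset of spec R that is π-stable. Then there exists an X-semiprime ideal J of R such that U = V(J). -/
/-!
Write `U = V(I)`. By Noetherian induction, every prime containing `I` contains one of finitely many
primes `Q₁, …, Qₙ ⊇ I`: if `I` is not prime, pick `AB ⊆ I` with `A, B ⊄ I` and recurse on `A + I`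
and `B + I`. Take `J = ⋂ (Qᵢ : X)`. A prime `P ⊇ I` contains some `Qᵢ ⊇ (Qᵢ : X) ⊇ J`. Conversely,
a prime `P ⊇ J` contains a product of the `(Qᵢ : X)`, hence some `(Qᵢ : X)`; a prime `m ⊆ P` minimal
over `(Qᵢ : X)` has `(m : X) = (Qᵢ : X)` by (b), so `m ∈ U` by `π`-stability and `I ⊆ m ⊆ P`.
-/
open Set

section

variable {R : Type*} [Ring R]

lemma IsTwoSidedI.sup {A B : Ideal R} (hA : IsTwoSidedI A) (hB : IsTwoSidedI B) :
    IsTwoSidedI (A ⊔ B) := by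
  intro x hx r
  obtain ⟨a, ha, b, hb, rfl⟩ := Submodule.mem_sup.mp hx
  rw [add_mul]
  exact Submodule.add_mem_sup (hA a ha r) (hB b hb r)

lemma isTwoSidedI_sInf {T : Set (Ideal R)} (hT : ∀ A ∈ T, IsTwoSidedI A) :
    IsTwoSidedI (sInf T) := fun x hx r =>
  Submodule.mem_sInf.mpr fun A hA => hT A hA x (Submodule.mem_sInf.mp hx A hA) r

lemma IsTwoSidedI.mul_le_inf {A B : Ideal R} (hA : IsTwoSidedI A) : A * B ≤ A ⊓ B :=
  Ideal.mul_le.mpr fun a ha b hb => ⟨hA a ha b, B.mul_mem_left a hb⟩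

lemma IsTwoSidedI.sup_mul_sup_le {A B I : Ideal R} (hI : IsTwoSidedI I) (h : A * B ≤ I) :
    (A ⊔ I) * (B ⊔ I) ≤ I := by
  simp only [Ideal.sup_mul, Ideal.mul_sup, sup_le_iff]
  exact ⟨⟨h, hI.mul_le_inf.trans inf_le_left⟩, Ideal.mul_le_right, Ideal.mul_le_right⟩

namespace IsPrimeTS

variable {P : Ideal R}

lemma le_or_le_of_mul_le (hP : IsPrimeTS P) {A B : Ideal R} (hA : IsTwoSidedI A)
    (hB : IsTwoSidedI B) (h : A * B ≤ P) : A ≤ P ∨ B ≤ P :=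
  hP.2.2 A B hA hB (Ideal.mul_le.mp h)

lemma le_or_le_of_inf_le (hP : IsPrimeTS P) {A B : Ideal R} (hA : IsTwoSidedI A)
    (hB : IsTwoSidedI B) (h : A ⊓ B ≤ P) : A ≤ P ∨ B ≤ P :=
  hP.le_or_le_of_mul_le hA hB (hA.mul_le_inf.trans h)

lemma exists_le_of_sInf_le (hP : IsPrimeTS P) {T : Set (Ideal R)} (hT : T.Finite)
    (hTts : ∀ A ∈ T, IsTwoSidedI A) (h : sInf T ≤ P) : ∃ A ∈ T, A ≤ P := by
  induction T, hT using Set.Finite.induction_on with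
  | empty => exact absurd (top_le_iff.mp (sInf_empty (α := Ideal R) ▸ h)) hP.2.1
  | @insert A T _ _ ih =>
    have hTts' : ∀ B ∈ T, IsTwoSidedI B := fun B hB => hTts B (mem_insert_of_mem A hB)
    rw [sInf_insert] at h
    rcases hP.le_or_le_of_inf_le (hTts A (mem_insert A T)) (isTwoSidedI_sInf hTts') h
      with hA | hT
    · exact ⟨A, mem_insert A T, hA⟩
    · obtain ⟨B, hB, hBP⟩ := ih hTts' hT
      exact ⟨B, mem_insert_of_mem A hB, hBP⟩

lemma sInf_of_isChain {c : Set (Ideal R)} (hne : c.Nonempty) (hchain : IsChain (· ≤ ·) c)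
    (hc : ∀ P ∈ c, IsPrimeTS P) : IsPrimeTS (sInf c) := by
  obtain ⟨P₀, hP₀⟩ := hne
  refine ⟨isTwoSidedI_sInf fun P hP => (hc P hP).1,
    fun htop => (hc P₀ hP₀).2.1 (top_le_iff.mp (htop ▸ sInf_le hP₀)), fun I J hI hJ hIJ => ?_⟩
  by_contra! hor
  obtain ⟨P₁, hP₁, hIP₁⟩ : ∃ P₁ ∈ c, ¬I ≤ P₁ := by simpa using hor.1
  obtain ⟨P₂, hP₂, hJP₂⟩ : ∃ P₂ ∈ c, ¬J ≤ P₂ := by simpa using hor.2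
  -- the smaller of `P₁`, `P₂` contains `IJ` but neither `I` nor `J`
  have below_both : ∀ P ∈ c, P ≤ P₁ → P ≤ P₂ → False := fun P hP h₁ h₂ =>
    ((hc P hP).2.2 I J hI hJ fun a ha b hb => Submodule.mem_sInf.mp (hIJ a ha b hb) P hP).elim
      (fun h => hIP₁ (h.trans h₁)) (fun h => hJP₂ (h.trans h₂))
  rcases hchain.total hP₁ hP₂ with h | h
  · exact below_both P₁ hP₁ le_rfl h
  · exact below_both P₂ hP₂ h le_rfl

end IsPrimeTS

lemma exists_minimal_isPrimeTS_le {Q P : Ideal R} (hP : IsPrimeTS P) (hQP : Q ≤ P) :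
    ∃ m ≤ P, Minimal (fun m => IsPrimeTS m ∧ Q ≤ m) m := by
  let s : Set (Ideal R)ᵒᵈ := {m | IsPrimeTS (OrderDual.ofDual m) ∧ Q ≤ OrderDual.ofDual m}
  have chain_bounded : ∀ c ⊆ s, IsChain (· ≤ ·) c → ∀ y ∈ c, ∃ lb ∈ s, ∀ z ∈ c, z ≤ lb :=
    fun c hcs hchain y hy => ⟨OrderDual.toDual (sInf (OrderDual.toDual ⁻¹' c)),
      ⟨IsPrimeTS.sInf_of_isChain ⟨y, hy⟩ hchain.symm fun P hP => (hcs hP).1,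
        le_sInf fun P hP => (hcs hP).2⟩,
      fun z hz => show sInf _ ≤ OrderDual.ofDual z from sInf_le hz⟩
  obtain ⟨m, hPm, hmax⟩ := zorn_le_nonempty₀ s chain_bounded (OrderDual.toDual P) ⟨hP, hQP⟩
  exact ⟨OrderDual.ofDual m, hPm, hmax.of_dual⟩

theorem IsTwoSidedI.exists_finite_coinitial_primes_over [IsNoetherianRing R] {I : Ideal R}
    (hI : IsTwoSidedI I) :
    ∃ S : Set (Ideal R), S.Finite ∧ (∀ Q ∈ S, IsPrimeTS Q ∧ I ≤ Q) ∧
      ∀ P, IsPrimeTS P → I ≤ P → ∃ Q ∈ S, Q ≤ P := by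
  induction I using IsNoetherian.induction with
  | hgt I ih =>
  by_cases htop : I = ⊤
  · subst htop
    exact ⟨∅, finite_empty, by simp, fun P hP hle => absurd (top_le_iff.mp hle) hP.2.1⟩
  by_cases hprime : IsPrimeTS I
  · exact ⟨{I}, finite_singleton I, by simp [hprime], fun P _ hIP => ⟨I, rfl, hIP⟩⟩
  obtain ⟨A, B, hA, hB, hAB, hAI, hBI⟩ : ∃ A B : Ideal R, IsTwoSidedI A ∧ IsTwoSidedI B ∧
      (∀ a ∈ A, ∀ b ∈ B, a * b ∈ I) ∧ ¬A ≤ I ∧ ¬B ≤ I := by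
    simpa [IsPrimeTS, hI, htop, not_or] using hprime
  obtain ⟨S₁, hS₁fin, hS₁, hS₁cover⟩ :=
    ih (A ⊔ I) (right_lt_sup.mpr hAI) (hA.sup hI)
  obtain ⟨S₂, hS₂fin, hS₂, hS₂cover⟩ :=
    ih (B ⊔ I) (right_lt_sup.mpr hBI) (hB.sup hI)
  refine ⟨S₁ ∪ S₂, hS₁fin.union hS₂fin, ?_, fun P hP hIP => ?_⟩
  · rintro Q (hQ | hQ)
    · exact ⟨(hS₁ Q hQ).1, le_sup_right.trans (hS₁ Q hQ).2⟩
    · exact ⟨(hS₂ Q hQ).1, le_sup_right.trans (hS₂ Q hQ).2⟩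
  rcases hP.le_or_le_of_mul_le (hA.sup hI) (hB.sup hI)
      ((hI.sup_mul_sup_le (Ideal.mul_le.mpr hAB)).trans hIP) with h | h
  · obtain ⟨Q, hQ, hQP⟩ := hS₁cover P hP h
    exact ⟨Q, Or.inl hQ, hQP⟩
  · obtain ⟨Q, hQ, hQP⟩ := hS₂cover P hP h
    exact ⟨Q, Or.inr hQ, hQP⟩

end

theorem stmt_1_general {R : Type*} [Ring R] [IsNoetherianRing R]
    (𝒳 : Set (Ideal R))
    (h𝒳ts : ∀ Q ∈ 𝒳, IsTwoSidedI Q)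
    (q : Ideal R → Ideal R)
    (ha : ∀ P : Ideal R, IsPrimeTS P →
      q P ∈ 𝒳 ∧ q P ≤ P ∧ ∀ J, IsXSemiprime 𝒳 J → J ≤ P → J ≤ q P)
    (hb : ∀ Q ∈ 𝒳, ∀ P : Ideal R, IsPrimeTS P → Q ≤ P →
      (∀ P', IsPrimeTS P' → Q ≤ P' → P' ≤ P → P' = P) → q P = Q)
    (U : Set (Ideal R))
    (hUclosed : ∃ I : Ideal R, IsTwoSidedI I ∧ U = {P | IsPrimeTS P ∧ I ≤ P})
    (hUstable : ∀ P : Ideal R, IsPrimeTS P → (∃ P' ∈ U, q P' = q P) → P ∈ U) :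
    ∃ J : Ideal R, IsXSemiprime 𝒳 J ∧ U = {P | IsPrimeTS P ∧ J ≤ P} := by
  obtain ⟨I, hI, rfl⟩ := hUclosed
  obtain ⟨S, hSfin, hS, hScover⟩ := hI.exists_finite_coinitial_primes_over
  have hqS : q '' S ⊆ 𝒳 := image_subset_iff.mpr fun Q hQ => (ha Q (hS Q hQ).1).1
  refine ⟨sInf (q '' S), ⟨q '' S, hqS, rfl⟩, Set.ext fun P => ⟨fun ⟨hP, hIP⟩ => ⟨hP, ?_⟩,
    fun ⟨hP, hJP⟩ => ⟨hP, ?_⟩⟩⟩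
  · obtain ⟨Q, hQS, hQP⟩ := hScover P hP hIP
    exact (sInf_le (mem_image_of_mem q hQS)).trans ((ha Q (hS Q hQS).1).2.1.trans hQP)
  · obtain ⟨_, ⟨Q, hQS, rfl⟩, hqQP⟩ :=
      hP.exists_le_of_sInf_le (hSfin.image q) (fun A hA => h𝒳ts A (hqS hA)) hJP
    obtain ⟨m, hmP, hmin⟩ := exists_minimal_isPrimeTS_le hP hqQP
    have hqm : q m = q Q := hb (q Q) (ha Q (hS Q hQS).1).1 m hmin.1.1 hmin.1.2
      fun P' hP' hQP' hP'm => le_antisymm hP'm (hmin.2 ⟨hP', hQP'⟩ hP'm)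
    exact ((hUstable m hmin.1.1 ⟨Q, hS Q hQS, hqm.symm⟩).2).trans hmP

/-- Lemma 1.6: a closed `π`-stable subset `U` of `spec R` has the form
`U = V(J)` for some `X`-semiprime ideal `J`. -/
theorem stmt_1 {R : Type*} [Ring R] [IsNoetherianRing R] [IsNoetherianRing Rᵐᵒᵖ]
    (𝒳 : Set (Ideal R)) (h𝒳ne : 𝒳.Nonempty)
    (h𝒳ts : ∀ Q ∈ 𝒳, IsTwoSidedI Q)
    (q : Ideal R → Ideal R)
    (ha : ∀ P : Ideal R, IsPrimeTS P →
      q P ∈ 𝒳 ∧ q P ≤ P ∧ ∀ J, IsXSemiprime 𝒳 J → J ≤ P → J ≤ q P)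
    (hb : ∀ Q ∈ 𝒳, ∀ P : Ideal R, IsPrimeTS P → Q ≤ P →
      (∀ P', IsPrimeTS P' → Q ≤ P' → P' ≤ P → P' = P) → q P = Q)
    (U : Set (Ideal R))
    (hUclosed : ∃ I : Ideal R, IsTwoSidedI I ∧ U = {P | IsPrimeTS P ∧ I ≤ P})
    (hUstable : ∀ P : Ideal R, IsPrimeTS P → (∃ P' ∈ U, q P' = q P) → P ∈ U) :
    ∃ J : Ideal R, IsXSemiprime 𝒳 J ∧ U = {P | IsPrimeTS P ∧ J ≤ P} :=
  stmt_1_general 𝒳 h𝒳ts q ha hb U hUclosed hUstable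
end

section
/- (a) Suppose that the intersection of every relatively π-stable subset of prim R is an X-semiprime ideal of R. Then the restriction of π to prim R is a topological quotient map from prim R onto π(prim R), both carrying relative topologies. (b) Likewise, if the intersection of every relatively π-stable subset of max R is X-semiprime, then π restricts to a topological quotient map from max R onto π(max R). -/
/-- A left primitive ideal: the annihilator of a simple left module. -/
def IsLeftPrimitiveT {R : Type u} [Ring R] (P : Ideal R) : Prop :=
  ∃ (M : Type u) (_ : AddCommGroup M) (_ : Module R M),
    IsSimpleModule R M ∧ ∀ x : R, x ∈ P ↔ ∀ m : M, x • m = 0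

/-- A maximal (two-sided) ideal of a not-necessarily-commutative ring. -/
def IsMaxTS {R : Type*} [Ring R] (M : Ideal R) : Prop :=
  IsTwoSidedI M ∧ M ≠ ⊤ ∧ ∀ J : Ideal R, IsTwoSidedI J → M < J → J = ⊤

/-- A left primitive ideal is prime. -/
lemma primitive_isPrimeTS {R : Type u} [Ring R] {P : Ideal R}
    (hP : IsLeftPrimitiveT P) : IsPrimeTS P := by
  obtain ⟨M, _, _, hsimp, hmem⟩ := hP
  have hnt : Nontrivial M := IsSimpleModule.nontrivial R M
  refine ⟨?_, ?_, ?_⟩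
  · intro a haP r
    rw [hmem] at haP ⊢
    intro m
    rw [mul_smul]
    exact haP (r • m)
  · intro hPT
    obtain ⟨m, hm⟩ := exists_ne (0 : M)
    have h1 : (1 : R) ∈ P := hPT ▸ Submodule.mem_top
    rw [hmem] at h1
    exact hm (by simpa using h1 m)
  · intro I J hIts hJts hIJ
    by_cases hI : I ≤ P
    · exact Or.inl hI
    · right
      intro b hb
      rw [hmem]
      -- get a ∈ I, a ∉ P
      obtain ⟨a, haI, haP⟩ := SetLike.not_le_iff_exists.mp hI
      rw [hmem] at haP
      push_neg at haP
      obtain ⟨m0, hm0⟩ := haP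
      intro m
      -- the submodule J • ⊤ is nonzero (else J ≤ P, but we just show directly)
      by_cases hJM : (J • (⊤ : Submodule R M)) = ⊥
      · -- then b • m ∈ ⊥
        have : b • m ∈ J • (⊤ : Submodule R M) := Submodule.smul_mem_smul hb Submodule.mem_top
        rw [hJM] at this
        simpa using this
      · -- J • ⊤ = ⊤ by simplicity; then a kills everything, contradiction
        have hJT : (J • (⊤ : Submodule R M)) = ⊤ :=
          (eq_bot_or_eq_top _).resolve_left hJM
        exfalso
        apply hm0
        have hm0' : m0 ∈ J • (⊤ : Submodule R M) := by rw [hJT]; exact Submodule.mem_top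
        refine Submodule.smul_induction_on hm0' ?_ ?_
        · intro r hr n _
          rw [← mul_smul]
          have : a * r ∈ P := hIJ a haI r hr
          rw [hmem] at this
          exact this n
        · intro x y hx hy
          rw [smul_add, hx, hy, add_zero]

/-- A maximal two-sided ideal is prime. -/
lemma max_isPrimeTS {R : Type*} [Ring R] {P : Ideal R}
    (hP : IsMaxTS P) : IsPrimeTS P := by
  obtain ⟨hts, hne, hmax⟩ := hP
  refine ⟨hts, hne, ?_⟩
  intro I J hIts hJts hIJ
  by_cases hI : I ≤ P
  · exact Or.inl hI
  · right
    have hsupts : IsTwoSidedI (P ⊔ I) := by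
      intro a ha r
      obtain ⟨p, hp, i, hi, rfl⟩ := Submodule.mem_sup.mp ha
      rw [add_mul]
      exact Submodule.add_mem_sup (hts p hp r) (hIts i hi r)
    have hlt : P < P ⊔ I := left_lt_sup.mpr hI
    have htop : P ⊔ I = ⊤ := hmax _ hsupts hlt
    have h1 : (1 : R) ∈ P ⊔ I := htop ▸ Submodule.mem_top
    obtain ⟨p, hp, i, hi, hpi⟩ := Submodule.mem_sup.mp h1
    intro b hb
    have : b = p * b + i * b := by rw [← add_mul, hpi, one_mul]
    rw [this]
    exact add_mem (hts p hp b) (hIJ i hi b hb)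

/-- Key lemma: the quotient-map property for any subset `S` of the prime spectrum. -/
lemma key_lemma {R : Type*} [Ring R] (𝒳 : Set (Ideal R))
    (h𝒳ts : ∀ Q ∈ 𝒳, IsTwoSidedI Q)
    (q : Ideal R → Ideal R)
    (ha : ∀ P : Ideal R, IsPrimeTS P →
      q P ∈ 𝒳 ∧ q P ≤ P ∧ ∀ J, IsXSemiprime 𝒳 J → J ≤ P → J ≤ q P)
    (S : Set (Ideal R)) (hS : ∀ P ∈ S, IsPrimeTS P)
    (hsemi : ∀ U : Set (Ideal R),
        (∃ V : Set (Ideal R), V ⊆ {P | IsPrimeTS P} ∧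
          (∀ P : Ideal R, IsPrimeTS P → (∃ P' ∈ V, q P' = q P) → P ∈ V) ∧
          U = V ∩ S) →
        IsXSemiprime 𝒳 (sInf U)) :
    ∀ W ⊆ q '' S,
      (∃ I : Ideal R, IsTwoSidedI I ∧ W = {Q | Q ∈ q '' S ∧ I ≤ Q}) ↔
      (∃ I : Ideal R, IsTwoSidedI I ∧
          {P | P ∈ S ∧ q P ∈ W} = {P | P ∈ S ∧ I ≤ P}) := by
  intro W hWsub
  constructor
  · rintro ⟨I, hIts, hW⟩
    set T : Set (Ideal R) := {Q ∈ 𝒳 | I ≤ Q} with hT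
    refine ⟨sInf T, ?_, ?_⟩
    · intro a haT r
      rw [Submodule.mem_sInf] at haT ⊢
      intro Q hQ
      exact h𝒳ts Q hQ.1 a (haT Q hQ) r
    · have hII' : I ≤ sInf T := le_sInf fun Q hQ => hQ.2
      have hsemiT : IsXSemiprime 𝒳 (sInf T) := ⟨T, fun Q hQ => hQ.1, rfl⟩
      ext P
      constructor
      · rintro ⟨hPS, hqW⟩
        rw [hW] at hqW
        have hqT : q P ∈ T := ⟨(ha P (hS P hPS)).1, hqW.2⟩
        exact ⟨hPS, le_trans (sInf_le hqT) (ha P (hS P hPS)).2.1⟩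
      · rintro ⟨hPS, hIP⟩
        have hp := hS P hPS
        have hIq : sInf T ≤ q P := (ha P hp).2.2 _ hsemiT hIP
        refine ⟨hPS, ?_⟩
        rw [hW]
        exact ⟨⟨P, hPS, rfl⟩, le_trans hII' hIq⟩
  · rintro ⟨I, hIts, hU⟩
    have hU' : ∀ P : Ideal R, (P ∈ S ∧ q P ∈ W) ↔ (P ∈ S ∧ I ≤ P) :=
      fun P => Set.ext_iff.mp hU P
    set U : Set (Ideal R) := {P | P ∈ S ∧ q P ∈ W} with hUdef
    have hJsemi : IsXSemiprime 𝒳 (sInf U) := by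
      apply hsemi
      refine ⟨{P | IsPrimeTS P ∧ q P ∈ W}, fun P hP => hP.1, ?_, ?_⟩
      · rintro P hp ⟨P', hP', hqq⟩
        exact ⟨hp, hqq ▸ hP'.2⟩
      · ext P
        constructor
        · rintro ⟨hPS, hqW⟩
          exact ⟨⟨hS P hPS, hqW⟩, hPS⟩
        · rintro ⟨⟨_, hqW⟩, hPS⟩
          exact ⟨hPS, hqW⟩
    refine ⟨sInf U, ?_, ?_⟩
    · obtain ⟨T, hT, hJ⟩ := hJsemi
      rw [hJ]
      intro a haT r
      rw [Submodule.mem_sInf] at haT ⊢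
      intro Q hQ
      exact h𝒳ts Q (hT hQ) a (haT Q hQ) r
    · have hIJ : I ≤ sInf U := le_sInf fun P' hP' => ((hU' P').mp hP').2
      ext Q
      constructor
      · intro hQW
        obtain ⟨P, hPS, rfl⟩ := hWsub hQW
        have hPU : P ∈ U := ⟨hPS, hQW⟩
        have : sInf U ≤ q P :=
          (ha P (hS P hPS)).2.2 _ hJsemi (sInf_le hPU)
        exact ⟨⟨P, hPS, rfl⟩, this⟩
      · rintro ⟨⟨P, hPS, rfl⟩, hJQ⟩
        have hIP : I ≤ P := le_trans hIJ (le_trans hJQ (ha P (hS P hPS)).2.1)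
        exact ((hU' P).mpr ⟨hPS, hIP⟩).2

/-- Proposition 1.8: (a) if the intersection of every relatively `π`-stable
subset of `prim R` is `X`-semiprime, then `π` restricts to a topological quotient map
`prim R → π(prim R)`; (b) likewise for `max R`.  Closedness is expressed via the
relative Zariski topologies. -/
theorem stmt_3 {R : Type u} [Ring R] [IsNoetherianRing R] [IsNoetherianRing Rᵐᵒᵖ]
    (𝒳 : Set (Ideal R)) (h𝒳ne : 𝒳.Nonempty)
    (h𝒳ts : ∀ Q ∈ 𝒳, IsTwoSidedI Q)
    (q : Ideal R → Ideal R)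
    (ha : ∀ P : Ideal R, IsPrimeTS P →
      q P ∈ 𝒳 ∧ q P ≤ P ∧ ∀ J, IsXSemiprime 𝒳 J → J ≤ P → J ≤ q P)
    (hb : ∀ Q ∈ 𝒳, ∀ P : Ideal R, IsPrimeTS P → Q ≤ P →
      (∀ P', IsPrimeTS P' → Q ≤ P' → P' ≤ P → P' = P) → q P = Q) :
    -- (a)
    ((∀ U : Set (Ideal R),
        (∃ V : Set (Ideal R), V ⊆ {P | IsPrimeTS P} ∧
          (∀ P : Ideal R, IsPrimeTS P → (∃ P' ∈ V, q P' = q P) → P ∈ V) ∧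
          U = V ∩ {P | IsLeftPrimitiveT P}) →
        IsXSemiprime 𝒳 (sInf U)) →
      ∀ W ⊆ q '' {P | IsLeftPrimitiveT P},
        (∃ I : Ideal R, IsTwoSidedI I ∧
            W = {Q | Q ∈ q '' {P | IsLeftPrimitiveT P} ∧ I ≤ Q}) ↔
        (∃ I : Ideal R, IsTwoSidedI I ∧
            {P | IsLeftPrimitiveT P ∧ q P ∈ W} = {P | IsLeftPrimitiveT P ∧ I ≤ P})) ∧
    -- (b)
    ((∀ U : Set (Ideal R),
        (∃ V : Set (Ideal R), V ⊆ {P | IsPrimeTS P} ∧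
          (∀ P : Ideal R, IsPrimeTS P → (∃ P' ∈ V, q P' = q P) → P ∈ V) ∧
          U = V ∩ {M | IsMaxTS M}) →
        IsXSemiprime 𝒳 (sInf U)) →
      ∀ W ⊆ q '' {M | IsMaxTS M},
        (∃ I : Ideal R, IsTwoSidedI I ∧
            W = {Q | Q ∈ q '' {M | IsMaxTS M} ∧ I ≤ Q}) ↔
        (∃ I : Ideal R, IsTwoSidedI I ∧
            {M | IsMaxTS M ∧ q M ∈ W} = {M | IsMaxTS M ∧ I ≤ M})) := by
  constructor
  · intro hsemi
    exact key_lemma 𝒳 h𝒳ts q ha {P | IsLeftPrimitiveT P}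
      (fun P hP => primitive_isPrimeTS hP) hsemi
  · intro hsemi
    exact key_lemma 𝒳 h𝒳ts q ha {M | IsMaxTS M}
      (fun P hP => max_isPrimeTS hP) hsemi
end

section
/- (a) For every prime ideal P of R, the ideal (P : G) is G-prime. (b) If Q is a G-prime ideal of R and P is a prime ideal of R minimal over Q, then Q = (P : G), every prime ideal of R minimal over Q lies in the G-orbit of P, and Q is a semiprime ideal (an intersection of prime ideals). -/
/-- The translate of an ideal under the ring automorphism given by a group element
(expressed as a preimage, which for a group action gives the same family of translates). -/
def gTrans {R : Type*} [Ring R] {G : Type*} [Group G] [MulSemiringAction G R]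
    (g : G) (I : Ideal R) : Ideal R :=
  Ideal.comap (MulSemiringAction.toRingHom G R g) I

/-- A `G`-ideal: a two-sided ideal stable under the action of `G`. -/
def IsGIdeal {R : Type*} [Ring R] (G : Type*) [Group G] [MulSemiringAction G R]
    (I : Ideal R) : Prop :=
  IsTwoSidedI I ∧ ∀ g : G, gTrans g I = I

/-- A `G`-prime ideal: a proper `G`-ideal `Q` with `IJ ⊆ Q → I ⊆ Q ∨ J ⊆ Q`
for all `G`-ideals `I`, `J`. -/
def IsGPrime {R : Type*} [Ring R] (G : Type*) [Group G] [MulSemiringAction G R]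
    (Q : Ideal R) : Prop :=
  IsGIdeal G Q ∧ Q ≠ ⊤ ∧
    ∀ I J : Ideal R, IsGIdeal G I → IsGIdeal G J →
      (∀ a ∈ I, ∀ b ∈ J, a * b ∈ Q) → I ≤ Q ∨ J ≤ Q

/-- `(I : G) = ⋂_{g ∈ G} g(I)`, the largest `G`-ideal contained in `I`. -/
noncomputable def resGIdeal {R : Type*} [Ring R] (G : Type*) [Group G] [MulSemiringAction G R]
    (I : Ideal R) : Ideal R :=
  ⨅ g : G, gTrans g I

section TwoSided

variable {R : Type*} [Ring R]

theorem isTwoSidedI_iff {I : Ideal R} : IsTwoSidedI I ↔ I.IsTwoSided :=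
  ⟨fun hI => (Ideal.isTwoSided_iff I).2 fun b ha => hI _ ha b,
    fun _ _ ha r => I.mul_mem_right r ha⟩

theorem IsTwoSidedI.isTwoSided {I : Ideal R} (hI : IsTwoSidedI I) : I.IsTwoSided :=
  isTwoSidedI_iff.1 hI

theorem isTwoSidedI_top : IsTwoSidedI (⊤ : Ideal R) :=
  fun _ _ _ => Submodule.mem_top

theorem IsTwoSidedI.sup_s4 {I J : Ideal R} (hI : IsTwoSidedI I) (hJ : IsTwoSidedI J) :
    IsTwoSidedI (I ⊔ J) := fun a ha r => by
  obtain ⟨x, hx, y, hy, rfl⟩ := Submodule.mem_sup.1 ha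
  rw [add_mul]
  exact Submodule.add_mem_sup (hI x hx r) (hJ y hy r)

theorem IsTwoSidedI.mul {I J : Ideal R} (hJ : IsTwoSidedI J) : IsTwoSidedI (I * J) := by
  have := hJ.isTwoSided
  exact isTwoSidedI_iff.2 inferInstance

theorem isTwoSidedI_sInf_s4 {S : Set (Ideal R)} (hS : ∀ I ∈ S, IsTwoSidedI I) :
    IsTwoSidedI (sInf S) := fun a ha r =>
  Submodule.mem_sInf.2 fun I hI => hS I hI a (Submodule.mem_sInf.1 ha I hI) r

theorem IsPrimeTS.le_or_le_of_mul_le_s4 {P I J : Ideal R} (hP : IsPrimeTS P) (hI : IsTwoSidedI I)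
    (hJ : IsTwoSidedI J) (h : I * J ≤ P) : I ≤ P ∨ J ≤ P :=
  hP.2.2 I J hI hJ (Ideal.mul_le.1 h)

/-- Primes and `G`-primes are both prime with respect to a class `C` of ideals containing `⊤` and
closed under products. -/
theorem le_of_pow_le_of_mul_le {C : Ideal R → Prop} (hC_top : C ⊤)
    (hC_mul : ∀ I J, C I → C J → C (I * J)) {Q : Ideal R} (hQ : Q ≠ ⊤)
    (hQC : ∀ I J, C I → C J → I * J ≤ Q → I ≤ Q ∨ J ≤ Q) {I : Ideal R} (hI : C I) :
    ∀ {n : ℕ}, I ^ n ≤ Q → I ≤ Q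
  | 0, h => absurd (top_le_iff.1 (by rwa [Submodule.pow_zero, Ideal.one_eq_top] at h)) hQ
  | n + 1, h => by
    have hC_pow : ∀ m : ℕ, C (I ^ m) := fun m => by
      induction m with
      | zero => rwa [Submodule.pow_zero, Ideal.one_eq_top]
      | succ m ih => rw [Submodule.pow_succ]; exact hC_mul _ _ ih hI
    rw [Submodule.pow_succ] at h
    exact (hQC _ _ (hC_pow n) hI h).elim (le_of_pow_le_of_mul_le hC_top hC_mul hQ hQC hI) id

theorem IsPrimeTS.le_of_pow_le {P I : Ideal R} (hP : IsPrimeTS P) (hI : IsTwoSidedI I) {n : ℕ}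
    (h : I ^ n ≤ P) : I ≤ P :=
  le_of_pow_le_of_mul_le isTwoSidedI_top (fun _ _ _ hJ => hJ.mul) hP.2.1
    (fun _ _ => hP.le_or_le_of_mul_le_s4) hI h

theorem IsPrimeTS.exists_le_of_sInf_le_s4 {P : Ideal R} (hP : IsPrimeTS P) {S : Set (Ideal R)}
    (hS : S.Finite) (hS_two : ∀ I ∈ S, IsTwoSidedI I) (h : sInf S ≤ P) : ∃ I ∈ S, I ≤ P := by
  induction S, hS using Set.Finite.induction_on with
  | empty => exact absurd (top_le_iff.1 (by simpa using h)) hP.2.1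
  | @insert I S _ _ ih =>
    have hI := hS_two I (Set.mem_insert I S)
    have hS_two' : ∀ J ∈ S, IsTwoSidedI J := fun J hJ => hS_two J (Set.mem_insert_of_mem I hJ)
    have := hI.isTwoSided
    rw [sInf_insert] at h
    rcases hP.le_or_le_of_mul_le_s4 hI (isTwoSidedI_sInf_s4 hS_two') (Ideal.mul_le_inf.trans h)
      with hIP | hSP
    · exact ⟨I, Set.mem_insert I S, hIP⟩
    · obtain ⟨J, hJ, hJP⟩ := ih hS_two' hSP
      exact ⟨J, Set.mem_insert_of_mem I hJ, hJP⟩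

/-- Noetherian induction: if `Q` is not prime, then `(I ⊔ Q) * (J ⊔ Q) ≤ Q` for some two-sided
`I, J` not contained in `Q`. -/
theorem exists_finite_primes_pow_le [IsNoetherianRing R] (Q : Ideal R) (hQ : IsTwoSidedI Q) :
    ∃ S : Set (Ideal R), S.Finite ∧ (∀ P ∈ S, IsPrimeTS P ∧ Q ≤ P) ∧
      ∃ n : ℕ, sInf S ^ n ≤ Q := by
  induction Q using IsNoetherian.induction with
  | _ Q ih =>
  by_cases hQ_top : Q = ⊤
  · exact ⟨∅, Set.finite_empty, by simp, 0, by simp [hQ_top]⟩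
  by_cases hQ_prime : IsPrimeTS Q
  · exact ⟨{Q}, Set.finite_singleton Q, by simpa using hQ_prime, 1, by simp [Submodule.pow_one]⟩
  obtain ⟨I, J, hI, hJ, hIJ, hIQ, hJQ⟩ : ∃ I J, IsTwoSidedI I ∧ IsTwoSidedI J ∧ I * J ≤ Q ∧
      ¬I ≤ Q ∧ ¬J ≤ Q := by
    by_contra! h
    exact hQ_prime ⟨hQ, hQ_top, fun I J hI hJ hIJ =>
      or_iff_not_imp_left.2 (h I J hI hJ (Ideal.mul_le.2 hIJ))⟩
  obtain ⟨S₁, hS₁, hS₁_prime, m, hm⟩ := ih (I ⊔ Q) (right_lt_sup.2 hIQ) (hI.sup_s4 hQ)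
  obtain ⟨S₂, hS₂, hS₂_prime, n, hn⟩ := ih (J ⊔ Q) (right_lt_sup.2 hJQ) (hJ.sup_s4 hQ)
  have hS_prime : ∀ P ∈ S₁ ∪ S₂, IsPrimeTS P ∧ Q ≤ P := by
    rintro P (hP | hP)
    · exact ⟨(hS₁_prime P hP).1, le_sup_right.trans (hS₁_prime P hP).2⟩
    · exact ⟨(hS₂_prime P hP).1, le_sup_right.trans (hS₂_prime P hP).2⟩
  have := hQ.isTwoSided
  have := (isTwoSidedI_sInf_s4 fun P hP => (hS_prime P hP).1.1).isTwoSided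
  refine ⟨S₁ ∪ S₂, hS₁.union hS₂, hS_prime, m + n, ?_⟩
  calc sInf (S₁ ∪ S₂) ^ (m + n) = sInf (S₁ ∪ S₂) ^ m * sInf (S₁ ∪ S₂) ^ n :=
        Ideal.IsTwoSided.pow_add m n
    _ ≤ (I ⊔ Q) * (J ⊔ Q) := Ideal.mul_mono
        ((Ideal.pow_right_mono (sInf_le_sInf Set.subset_union_left) m).trans hm)
        ((Ideal.pow_right_mono (sInf_le_sInf Set.subset_union_right) n).trans hn)
    _ ≤ Q := by
      rw [Ideal.sup_mul, Ideal.mul_sup, Ideal.mul_sup]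
      exact sup_le (sup_le hIJ Ideal.mul_le_right) (sup_le Ideal.mul_le_left Ideal.mul_le_right)

def minimalPrimesTS (Q : Ideal R) : Set (Ideal R) :=
  {P | Minimal (fun P => IsPrimeTS P ∧ Q ≤ P) P}

theorem mem_minimalPrimesTS_iff {Q P : Ideal R} :
    P ∈ minimalPrimesTS Q ↔
      IsPrimeTS P ∧ Q ≤ P ∧ ∀ P', IsPrimeTS P' → Q ≤ P' → P' ≤ P → P' = P :=
  ⟨fun hP => ⟨hP.1.1, hP.1.2, fun _ hP' hQP' h => le_antisymm h (hP.2 ⟨hP', hQP'⟩ h)⟩,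
    fun ⟨hP, hQP, hmin⟩ => ⟨⟨hP, hQP⟩, fun P' hP' hle => (hmin P' hP'.1 hP'.2 hle).ge⟩⟩

theorem eq_of_le_of_mem_minimalPrimesTS {Q P P' : Ideal R} (hP : P ∈ minimalPrimesTS Q)
    (hP' : IsPrimeTS P') (hQP' : Q ≤ P') (h : P' ≤ P) : P' = P :=
  (mem_minimalPrimesTS_iff.1 hP).2.2 P' hP' hQP' h

section FinitePrimes

variable {Q : Ideal R} {S : Set (Ideal R)} (hS : S.Finite)
  (hS_prime : ∀ P ∈ S, IsPrimeTS P ∧ Q ≤ P) {n : ℕ} (hSn : sInf S ^ n ≤ Q)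
include hS hS_prime hSn

theorem exists_mem_le_of_sInf_pow_le {P : Ideal R} (hP : IsPrimeTS P) (hQP : Q ≤ P) :
    ∃ I ∈ S, I ≤ P :=
  have hS_two : ∀ I ∈ S, IsTwoSidedI I := fun I hI => (hS_prime I hI).1.1
  hP.exists_le_of_sInf_le_s4 hS hS_two (hP.le_of_pow_le (isTwoSidedI_sInf_s4 hS_two) (hSn.trans hQP))

theorem minimalPrimesTS_subset_of_sInf_pow_le : minimalPrimesTS Q ⊆ S := fun P hP => by
  obtain ⟨I, hIS, hIP⟩ := exists_mem_le_of_sInf_pow_le hS hS_prime hSn hP.1.1 hP.1.2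
  rwa [← eq_of_le_of_mem_minimalPrimesTS hP (hS_prime I hIS).1 (hS_prime I hIS).2 hIP]

/-- A minimal member of `S` is minimal among all primes over `Q`, since each of them lies above
a member of `S`. -/
theorem sInf_minimalPrimesTS_le_of_sInf_pow_le : sInf (minimalPrimesTS Q) ≤ sInf S := by
  refine le_sInf fun I hI => ?_
  obtain ⟨M, hMI, hM⟩ := hS.exists_le_minimal hI
  refine sInf_le_of_le ⟨hS_prime M hM.1, fun P hP hPM => ?_⟩ hMI
  obtain ⟨J, hJS, hJP⟩ := exists_mem_le_of_sInf_pow_le hS hS_prime hSn hP.1 hP.2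
  exact (hM.2 hJS (hJP.trans hPM)).trans hJP

end FinitePrimes

theorem finite_minimalPrimesTS [IsNoetherianRing R] {Q : Ideal R} (hQ : IsTwoSidedI Q) :
    (minimalPrimesTS Q).Finite :=
  have ⟨_, hS, hS_prime, _, hSn⟩ := exists_finite_primes_pow_le Q hQ
  hS.subset (minimalPrimesTS_subset_of_sInf_pow_le hS hS_prime hSn)

theorem exists_sInf_minimalPrimesTS_pow_le [IsNoetherianRing R] {Q : Ideal R}
    (hQ : IsTwoSidedI Q) : ∃ n : ℕ, sInf (minimalPrimesTS Q) ^ n ≤ Q :=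
  have ⟨_, hS, hS_prime, n, hSn⟩ := exists_finite_primes_pow_le Q hQ
  ⟨n, (Ideal.pow_right_mono (sInf_minimalPrimesTS_le_of_sInf_pow_le hS hS_prime hSn) n).trans hSn⟩

end TwoSided

section GroupAction

variable {R : Type*} [Ring R] {G : Type*} [Group G] [MulSemiringAction G R]

@[simp]
theorem mem_gTrans {g : G} {I : Ideal R} {x : R} : x ∈ gTrans g I ↔ g • x ∈ I :=
  Iff.rfl

theorem gTrans_gTrans (g h : G) (I : Ideal R) : gTrans g (gTrans h I) = gTrans (h * g) I := by
  ext
  simp [mul_smul]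

@[simp]
theorem gTrans_one (I : Ideal R) : gTrans (1 : G) I = I := by
  ext
  simp

@[simp]
theorem gTrans_inv_gTrans (g : G) (I : Ideal R) : gTrans g⁻¹ (gTrans g I) = I := by
  rw [gTrans_gTrans, mul_inv_cancel, gTrans_one]

theorem gTrans_mono {g : G} {I J : Ideal R} (h : I ≤ J) : gTrans g I ≤ gTrans g J :=
  Ideal.comap_mono h

theorem gTrans_le_iff {g : G} {I J : Ideal R} : gTrans g I ≤ J ↔ I ≤ gTrans g⁻¹ J :=
  ⟨fun h => by simpa using gTrans_mono (g := g⁻¹) h,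
    fun h => by simpa [gTrans_gTrans] using gTrans_mono (g := g) h⟩

theorem IsTwoSidedI.gTrans {I : Ideal R} (hI : IsTwoSidedI I) (g : G) :
    IsTwoSidedI (gTrans g I) := fun a ha r => by
  simpa [smul_mul'] using hI _ ha (g • r)

theorem mul_le_gTrans_mul {g : G} {I J : Ideal R} :
    gTrans g I * gTrans g J ≤ gTrans g (I * J) :=
  Ideal.mul_le.2 fun a ha b hb => by
    rw [mem_gTrans, smul_mul']
    exact Ideal.mul_mem_mul ha hb

theorem IsPrimeTS.gTrans {P : Ideal R} (hP : IsPrimeTS P) (g : G) : IsPrimeTS (gTrans g P) := by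
  refine ⟨hP.1.gTrans g, Ideal.comap_ne_top _ hP.2.1, fun I J hI hJ hIJ => ?_⟩
  have h : _root_.gTrans g⁻¹ I * _root_.gTrans g⁻¹ J ≤ P := by
    simpa using mul_le_gTrans_mul.trans (gTrans_mono (g := g⁻¹) (Ideal.mul_le.2 hIJ))
  simpa only [gTrans_le_iff, inv_inv] using
    hP.le_or_le_of_mul_le_s4 (hI.gTrans g⁻¹) (hJ.gTrans g⁻¹) h

theorem IsGIdeal.of_le_gTrans {I : Ideal R} (hI : IsTwoSidedI I) (h : ∀ g : G, I ≤ gTrans g I) :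
    IsGIdeal G I :=
  ⟨hI, fun g => le_antisymm (gTrans_le_iff.2 (h g⁻¹)) (h g)⟩

theorem isGIdeal_top : IsGIdeal G (⊤ : Ideal R) :=
  .of_le_gTrans isTwoSidedI_top fun _ => le_top

theorem IsGIdeal.mul {I J : Ideal R} (hI : IsGIdeal G I) (hJ : IsGIdeal G J) :
    IsGIdeal G (I * J) :=
  .of_le_gTrans hJ.1.mul fun g => by
    simpa only [hI.2, hJ.2] using mul_le_gTrans_mul (g := g) (I := I) (J := J)

theorem isGIdeal_sInf {S : Set (Ideal R)} (hS : ∀ I ∈ S, IsTwoSidedI I)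
    (hS_stable : ∀ g : G, ∀ I ∈ S, gTrans g I ∈ S) : IsGIdeal G (sInf S) :=
  .of_le_gTrans (isTwoSidedI_sInf_s4 hS) fun g _ hx =>
    Submodule.mem_sInf.2 fun I hI => Submodule.mem_sInf.1 hx _ (hS_stable g I hI)

theorem IsGPrime.le_of_pow_le {Q I : Ideal R} (hQ : IsGPrime G Q) (hI : IsGIdeal G I) {n : ℕ}
    (h : I ^ n ≤ Q) : I ≤ Q :=
  le_of_pow_le_of_mul_le isGIdeal_top (fun _ _ => IsGIdeal.mul) hQ.2.1
    (fun I J hI hJ hIJ => hQ.2.2 I J hI hJ (Ideal.mul_le.1 hIJ)) hI h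

variable (G) in
def gOrbit (P : Ideal R) : Set (Ideal R) :=
  Set.range fun g : G => gTrans g P

theorem resGIdeal_eq_sInf_gOrbit (P : Ideal R) : resGIdeal G P = sInf (gOrbit G P) :=
  sInf_range.symm

theorem resGIdeal_le (P : Ideal R) : resGIdeal G P ≤ P :=
  iInf_le_of_le 1 (gTrans_one P).le

theorem le_resGIdeal {I P : Ideal R} (hI : ∀ g : G, gTrans g I = I) (h : I ≤ P) :
    I ≤ resGIdeal G P :=
  le_iInf fun g => hI g ▸ gTrans_mono h

theorem isGIdeal_resGIdeal {P : Ideal R} (hP : IsTwoSidedI P) : IsGIdeal G (resGIdeal G P) := by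
  rw [resGIdeal_eq_sInf_gOrbit]
  refine isGIdeal_sInf (by rintro _ ⟨g, rfl⟩; exact hP.gTrans g) ?_
  rintro g _ ⟨h, rfl⟩
  exact ⟨h * g, (gTrans_gTrans g h P).symm⟩

theorem isGPrime_resGIdeal {P : Ideal R} (hP : IsPrimeTS P) : IsGPrime G (resGIdeal G P) :=
  ⟨isGIdeal_resGIdeal hP.1, fun h => hP.2.1 (top_le_iff.1 (h ▸ resGIdeal_le P)),
    fun I J hI hJ hIJ => (hP.2.2 I J hI.1 hJ.1 fun a ha b hb => resGIdeal_le P (hIJ a ha b hb)).imp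
      (le_resGIdeal hI.2) (le_resGIdeal hJ.2)⟩

theorem gTrans_mem_minimalPrimesTS {Q P : Ideal R} (hQ : ∀ g : G, gTrans g Q = Q)
    (hP : P ∈ minimalPrimesTS Q) (g : G) : gTrans g P ∈ minimalPrimesTS Q := by
  have hPrimeOver : ∀ (g : G) {P}, IsPrimeTS P ∧ Q ≤ P → IsPrimeTS (gTrans g P) ∧ Q ≤ gTrans g P :=
    fun g _ h => ⟨h.1.gTrans g, hQ g ▸ gTrans_mono h.2⟩
  refine ⟨hPrimeOver g hP.1, fun P' hP' hP'P => ?_⟩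
  rw [← inv_inv g, ← gTrans_le_iff] at hP'P
  exact gTrans_le_iff.2 (hP.2 (hPrimeOver g⁻¹ hP') hP'P)

theorem gOrbit_subset_minimalPrimesTS {Q P : Ideal R} (hQ : ∀ g : G, gTrans g Q = Q)
    (hP : P ∈ minimalPrimesTS Q) : gOrbit G P ⊆ minimalPrimesTS Q := by
  rintro _ ⟨g, rfl⟩
  exact gTrans_mem_minimalPrimesTS hQ hP g

variable [IsNoetherianRing R]

/-- The intersection of the finitely many minimal primes over `Q` is a `G`-ideal with a power
inside `Q`. -/
theorem IsGPrime.sInf_minimalPrimesTS_le {Q : Ideal R} (hQ : IsGPrime G Q) :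
    sInf (minimalPrimesTS Q) ≤ Q :=
  have ⟨_, hn⟩ := exists_sInf_minimalPrimesTS_pow_le hQ.1.1
  hQ.le_of_pow_le (isGIdeal_sInf (fun _ hP => hP.1.1.1)
    fun g _ hP => gTrans_mem_minimalPrimesTS hQ.1.2 hP g) hn

/-- The orbit of `P` and the remaining minimal primes over `Q` have `G`-stable intersections whose
product lies in `Q`; the second cannot lie in `Q ≤ P`, as `P` is minimal. -/
theorem IsGPrime.resGIdeal_eq {Q P : Ideal R} (hQ : IsGPrime G Q) (hP : P ∈ minimalPrimesTS Q) :
    resGIdeal G P = Q := by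
  set C := minimalPrimesTS Q \ gOrbit G P
  have hC_two : ∀ I ∈ C, IsTwoSidedI I := fun I hI => hI.1.1.1.1
  have hC : IsGIdeal G (sInf C) := by
    refine isGIdeal_sInf hC_two fun g I ⟨hI, hIP⟩ => ⟨gTrans_mem_minimalPrimesTS hQ.1.2 hI g, ?_⟩
    rintro ⟨h, hh : gTrans h P = gTrans g I⟩
    exact hIP ⟨h * g⁻¹, show gTrans _ P = I by rw [← gTrans_gTrans, hh, gTrans_inv_gTrans]⟩
  have hres := isGIdeal_resGIdeal (G := G) hP.1.1.1
  have := hres.1.isTwoSided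
  have hmul : resGIdeal G P * sInf C ≤ Q :=
    calc resGIdeal G P * sInf C ≤ resGIdeal G P ⊓ sInf C := Ideal.mul_le_inf
      _ = sInf (gOrbit G P ∪ C) := by rw [sInf_union, resGIdeal_eq_sInf_gOrbit]
      _ ≤ sInf (minimalPrimesTS Q) :=
        sInf_le_sInf (by rw [Set.union_sdiff_self]; exact Set.subset_union_right)
      _ ≤ Q := hQ.sInf_minimalPrimesTS_le
  rcases hQ.2.2 _ _ hres hC (Ideal.mul_le.1 hmul) with hPQ | hCQ
  · exact le_antisymm hPQ (le_resGIdeal hQ.1.2 hP.1.2)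
  · obtain ⟨I, ⟨hI, hIP⟩, hIleP⟩ := hP.1.1.exists_le_of_sInf_le_s4
      ((finite_minimalPrimesTS hQ.1.1).sdiff) hC_two (hCQ.trans hP.1.2)
    have hIP' : I = P := eq_of_le_of_mem_minimalPrimesTS hP hI.1.1 hI.1.2 hIleP
    exact (hIP ⟨1, show gTrans 1 P = I by rw [gTrans_one, hIP']⟩).elim

theorem IsGPrime.exists_eq_gTrans {Q P P' : Ideal R} (hQ : IsGPrime G Q)
    (hP : P ∈ minimalPrimesTS Q) (hP' : P' ∈ minimalPrimesTS Q) : ∃ g : G, P' = gTrans g P := by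
  have hOrbit := gOrbit_subset_minimalPrimesTS hQ.1.2 hP'
  obtain ⟨_, ⟨g, rfl⟩, hgP⟩ := hP.1.1.exists_le_of_sInf_le_s4
    ((finite_minimalPrimesTS hQ.1.1).subset hOrbit) (fun I hI => (hOrbit hI).1.1.1)
    (by rw [← resGIdeal_eq_sInf_gOrbit, hQ.resGIdeal_eq hP']; exact hP.1.2)
  have hgP' : gTrans g P' = P :=
    eq_of_le_of_mem_minimalPrimesTS hP (hOrbit ⟨g, rfl⟩).1.1 (hOrbit ⟨g, rfl⟩).1.2 hgP
  exact ⟨g⁻¹, by rw [← hgP', gTrans_inv_gTrans]⟩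

end GroupAction

theorem stmt_4_general {R : Type*} [Ring R] [IsNoetherianRing R]
    (G : Type*) [Group G] [MulSemiringAction G R] :
    (∀ P : Ideal R, IsPrimeTS P → IsGPrime G (resGIdeal G P)) ∧
    (∀ Q : Ideal R, IsGPrime G Q → ∀ P : Ideal R, IsPrimeTS P → Q ≤ P →
      (∀ P', IsPrimeTS P' → Q ≤ P' → P' ≤ P → P' = P) →
        resGIdeal G P = Q ∧
        (∀ P', IsPrimeTS P' → Q ≤ P' →
          (∀ P'', IsPrimeTS P'' → Q ≤ P'' → P'' ≤ P' → P'' = P') →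
          ∃ g : G, P' = gTrans g P) ∧
        ∃ T : Set (Ideal R), (∀ P'' ∈ T, IsPrimeTS P'') ∧ Q = sInf T) := by
  refine ⟨fun P hP => isGPrime_resGIdeal hP, fun Q hQ P hP hQP hmin => ?_⟩
  have hP_min : P ∈ minimalPrimesTS Q := mem_minimalPrimesTS_iff.2 ⟨hP, hQP, hmin⟩
  refine ⟨hQ.resGIdeal_eq hP_min, fun P' hP' hQP' hmin' =>
    hQ.exists_eq_gTrans hP_min (mem_minimalPrimesTS_iff.2 ⟨hP', hQP', hmin'⟩), gOrbit G P, ?_, ?_⟩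
  · rintro _ ⟨g, rfl⟩
    exact hP.gTrans g
  · rw [← resGIdeal_eq_sInf_gOrbit, hQ.resGIdeal_eq hP_min]

/-- Lemma 1.10: (a) `(P : G)` is `G`-prime for every prime `P`;
(b) if `P` is a prime minimal over a `G`-prime `Q`, then `Q = (P : G)`, every prime
minimal over `Q` is in the `G`-orbit of `P`, and `Q` is semiprime. -/
theorem stmt_4 {R : Type*} [Ring R] [IsNoetherianRing R] [IsNoetherianRing Rᵐᵒᵖ]
    (G : Type*) [Group G] [MulSemiringAction G R] :
    (∀ P : Ideal R, IsPrimeTS P → IsGPrime G (resGIdeal G P)) ∧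
    (∀ Q : Ideal R, IsGPrime G Q → ∀ P : Ideal R, IsPrimeTS P → Q ≤ P →
      (∀ P', IsPrimeTS P' → Q ≤ P' → P' ≤ P → P' = P) →
        resGIdeal G P = Q ∧
        (∀ P', IsPrimeTS P' → Q ≤ P' →
          (∀ P'', IsPrimeTS P'' → Q ≤ P'' → P'' ≤ P' → P'' = P') →
          ∃ g : G, P' = gTrans g P) ∧
        ∃ T : Set (Ideal R), (∀ P'' ∈ T, IsPrimeTS P'') ∧ Q = sInf T) :=
  stmt_4_general G
end

section
/- (a) The set {(M : G) : M ∈ max R} coincides with G-max R, the set of maximal proper G-ideals of R. (b) If G is a Zariski-closed subgroup of H, then for maximal ideals M, M' of R one has (M : G) = (M' : G) if and only if M' = g(M) for some g ∈ G; that is, the fibers of the map max R → G-max R, M ↦ (M : G), are exactly the G-orbits in max R. -/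
/-- The character `α ↦ ∏ᵢ hᵢ^{αᵢ}` of `Γ = ℤⁿ` attached to `h ∈ (kˣ)ⁿ`. -/
def powChar {k : Type*} [Field k] {n : ℕ} (h : Fin n → kˣ) :
    Multiplicative (Fin n → ℤ) →* kˣ where
  toFun α := ∏ i, h i ^ (Multiplicative.toAdd α i)
  map_one' := by simp
  map_mul' a b := by
    simp [toAdd_mul, Pi.add_apply, zpow_add, Finset.prod_mul_distrib]

/-- Auxiliary monoid homomorphism `α ↦ χ(α) yᵅ` into the Laurent polynomial ring
`kΓ = k[y₁^{±1},…,yₙ^{±1}]` (realized as the group algebra of `Γ = ℤⁿ`). -/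
noncomputable def scaleMonHom {k : Type*} [Field k] {n : ℕ}
    (χ : Multiplicative (Fin n → ℤ) →* kˣ) :
    Multiplicative (Fin n → ℤ) →* AddMonoidAlgebra k (Fin n → ℤ) where
  toFun α := ((χ α : k)) • AddMonoidAlgebra.of k (Fin n → ℤ) α
  map_one' := by
    show (↑(χ 1) : k) • (AddMonoidAlgebra.of k (Fin n → ℤ)) 1 = 1
    rw [map_one, map_one, Units.val_one, one_smul]
  map_mul' a b := by
    show (↑(χ (a * b)) : k) • (AddMonoidAlgebra.of k (Fin n → ℤ)) (a * b)
      = ((↑(χ a) : k) • (AddMonoidAlgebra.of k (Fin n → ℤ)) a) *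
        ((↑(χ b) : k) • (AddMonoidAlgebra.of k (Fin n → ℤ)) b)
    rw [map_mul, map_mul, Units.val_mul, smul_mul_smul_comm]

/-- The `k`-algebra automorphism of the Laurent polynomial ring scaling the monomial
`yᵅ` by `χ(α)`, for a character `χ : Γ → kˣ`. -/
noncomputable def lactM {k : Type*} [Field k] {n : ℕ}
    (χ : Multiplicative (Fin n → ℤ) →* kˣ) :
    AddMonoidAlgebra k (Fin n → ℤ) →ₐ[k] AddMonoidAlgebra k (Fin n → ℤ) :=
  AddMonoidAlgebra.lift k _ (Fin n → ℤ) (scaleMonHom χ)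

/-- The action of `h ∈ H = (kˣ)ⁿ` on the Laurent polynomial ring, `yᵢ ↦ hᵢ yᵢ`. -/
noncomputable def lact {k : Type*} [Field k] {n : ℕ} (h : Fin n → kˣ) :
    AddMonoidAlgebra k (Fin n → ℤ) →ₐ[k] AddMonoidAlgebra k (Fin n → ℤ) :=
  lactM (powChar h)

/-- `(I : G) = ⋂_{g ∈ G} g(I)` for a subgroup `G ≤ H = (kˣ)ⁿ`. -/
noncomputable def resL {k : Type*} [Field k] {n : ℕ} (G : Subgroup (Fin n → kˣ))
    (I : Ideal (AddMonoidAlgebra k (Fin n → ℤ))) : Ideal (AddMonoidAlgebra k (Fin n → ℤ)) :=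
  ⨅ g ∈ G, Ideal.comap (lact g) I

/-- A `G`-ideal of the Laurent polynomial ring. -/
def IsGIdealL {k : Type*} [Field k] {n : ℕ} (G : Subgroup (Fin n → kˣ))
    (I : Ideal (AddMonoidAlgebra k (Fin n → ℤ))) : Prop :=
  ∀ g ∈ G, Ideal.comap (lact g) I = I

/-!
By the Nullstellensatz every maximal ideal of `R` is the kernel `M_p` of evaluation at a point `p`
of the torus, and `(M_p : G)` consists of the Laurent polynomials vanishing on the orbit `G p`.
If `(M_p : G) ⊆ M_q`, then `q` lies in the Zariski closure of `G p`, i.e. `q p⁻¹` lies in the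
Zariski closure `Ḡ` of `G`. This closure is again a subgroup, and `(M_p : Ḡ) = (M_p : G)`, so
`(M_p : G) = (M_p : Ḡ) = (M_{(q p⁻¹) p} : Ḡ) = (M_q : G)`. This makes `(M_p : G)` a maximal
`G`-ideal, and every proper `G`-ideal lies in some `(M_q : G)`, which gives (a); if `G` is closed
then `Ḡ = G`, which gives (b).
-/

open AddMonoidAlgebra

lemma Subgroup.forall_mem_mul_left_iff {H : Type*} [Group H] {G : Subgroup H} {g : H}
    (hg : g ∈ G) {P : H → Prop} : (∀ g' ∈ G, P (g * g')) ↔ ∀ g' ∈ G, P g' :=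
  ⟨fun h g' hg' => by simpa using h (g⁻¹ * g') (G.mul_mem (G.inv_mem hg) hg'),
    fun h g' hg' => h _ (G.mul_mem hg hg')⟩

lemma exists_algHom_ker_eq_of_isMaximal {k A : Type*} [Field k] [IsAlgClosed k] [CommRing A]
    [Algebra k A] [Algebra.FiniteType k A] (M : Ideal A) [M.IsMaximal] :
    ∃ ψ : A →ₐ[k] k, RingHom.ker ψ = M := by
  let := Ideal.Quotient.field M
  have : Module.Finite k (A ⧸ M) := finite_of_finite_type_of_isJacobsonRing k _
  let e : k ≃ₐ[k] A ⧸ M :=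
    AlgEquiv.ofBijective (Algebra.ofId k _) IsAlgClosed.algebraMap_bijective_of_isIntegral
  refine ⟨e.symm.toAlgHom.comp (Ideal.Quotient.mkₐ k M), ?_⟩
  exact (RingHom.ker_comp_of_injective _ e.symm.injective).trans Ideal.mk_ker

namespace LaurentTorus

variable {k : Type*} [Field k] {n : ℕ}

abbrev R (k : Type*) [Field k] (n : ℕ) := AddMonoidAlgebra k (Fin n → ℤ)

lemma powChar_apply (h : Fin n → kˣ) (x : Fin n → ℤ) :
    powChar h (Multiplicative.ofAdd x) = ∏ i, h i ^ x i := rfl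

lemma powChar_mul (g h : Fin n → kˣ) : powChar (g * h) = powChar g * powChar h := by
  ext x
  simp [powChar, mul_zpow, Finset.prod_mul_distrib]

lemma powChar_inv (h : Fin n → kˣ) (x : Fin n → ℤ) :
    powChar h⁻¹ (Multiplicative.ofAdd x) = powChar h (Multiplicative.ofAdd (-x)) := by
  simp [powChar_apply, inv_zpow']

lemma powChar_single (h : Fin n → kˣ) (i : Fin n) :
    powChar h (Multiplicative.ofAdd (Pi.single i 1)) = h i := by
  simp [powChar_apply, Pi.single_apply]

lemma eq_powChar (φ : Multiplicative (Fin n → ℤ) →* kˣ) :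
    φ = powChar fun i => φ (Multiplicative.ofAdd (Pi.single i 1)) := by
  refine MonoidHom.ext fun x => ?_
  have hx : x = ∏ i, Multiplicative.ofAdd (Pi.single i (1 : ℤ)) ^ (Multiplicative.toAdd x i) := by
    apply Multiplicative.toAdd.injective
    ext j
    simp [toAdd_prod, Finset.sum_apply, Pi.single_apply]
  conv_lhs => rw [hx]
  simp only [map_prod, map_zpow]
  rfl

lemma lact_single (g : Fin n → kˣ) (x : Fin n → ℤ) :
    lact g (single x 1 : R k n) = (powChar g (Multiplicative.ofAdd x) : k) • single x 1 := by
  simp [lact, lactM, scaleMonHom]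

lemma lact_lact (g h : Fin n → kˣ) (f : R k n) : lact g (lact h f) = lact (g * h) f := by
  suffices (lact g).comp (lact h) = lact (g * h) from DFunLike.congr_fun this f
  refine algHom_ext (fun x => ?_) (Subsingleton.elim _ _)
  rw [AlgHom.comp_apply, lact_single, map_smul, lact_single, smul_smul, lact_single, powChar_mul]
  simp [mul_comm]

lemma lact_one (f : R k n) : lact 1 f = f := by
  suffices lact (1 : Fin n → kˣ) = AlgHom.id k (R k n) from DFunLike.congr_fun this f
  refine algHom_ext (fun x => ?_) (Subsingleton.elim _ _)
  simp [lact_single, powChar_apply]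

noncomputable def evalAt (p : Fin n → kˣ) : R k n →ₐ[k] k :=
  AddMonoidAlgebra.lift k k (Fin n → ℤ) ((Units.coeHom k).comp (powChar p))

lemma evalAt_single (p : Fin n → kˣ) (x : Fin n → ℤ) :
    evalAt p (single x 1 : R k n) = powChar p (Multiplicative.ofAdd x) := by
  simp [evalAt]

lemma evalAt_lact (p g : Fin n → kˣ) (f : R k n) : evalAt p (lact g f) = evalAt (g * p) f := by
  suffices (evalAt p).comp (lact g) = evalAt (g * p) from DFunLike.congr_fun this f
  refine algHom_ext (fun x => ?_) (Subsingleton.elim _ _)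
  rw [AlgHom.comp_apply, lact_single, map_smul, evalAt_single, evalAt_single, powChar_mul]
  simp

noncomputable def invAut (k : Type*) [Field k] (n : ℕ) : R k n ≃ₐ[k] R k n :=
  AddMonoidAlgebra.domCongr k k (AddEquiv.neg _)

lemma evalAt_invAut (p : Fin n → kˣ) (f : R k n) : evalAt p (invAut k n f) = evalAt p⁻¹ f := by
  suffices (evalAt p).comp (invAut k n).toAlgHom = evalAt p⁻¹ from DFunLike.congr_fun this f
  refine algHom_ext (fun x => ?_) (Subsingleton.elim _ _)
  simp [invAut, evalAt_single, powChar_inv]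

lemma algHom_eq_evalAt (ψ : R k n →ₐ[k] k) : ∃ p : Fin n → kˣ, ψ = evalAt p := by
  let φ := ((ψ : R k n →* k).comp (of k _)).toHomUnits
  refine ⟨fun i => φ (Multiplicative.ofAdd (Pi.single i 1)), ?_⟩
  rw [evalAt, ← eq_powChar φ, lift_unique' ψ]
  congr 1

noncomputable def pointIdeal (p : Fin n → kˣ) : Ideal (R k n) := RingHom.ker (evalAt p)

lemma mem_pointIdeal {p : Fin n → kˣ} {f : R k n} : f ∈ pointIdeal p ↔ evalAt p f = 0 :=
  RingHom.mem_ker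

lemma pointIdeal_isMaximal (p : Fin n → kˣ) : (pointIdeal (k := k) p).IsMaximal :=
  RingHom.ker_isMaximal_of_surjective _ fun c => ⟨algebraMap k _ c, (evalAt p).commutes c⟩

lemma exists_eq_pointIdeal [IsAlgClosed k] (M : Ideal (R k n)) [M.IsMaximal] :
    ∃ p : Fin n → kˣ, M = pointIdeal p := by
  obtain ⟨ψ, hψ⟩ := exists_algHom_ker_eq_of_isMaximal (k := k) M
  obtain ⟨p, rfl⟩ := algHom_eq_evalAt ψ
  exact ⟨p, hψ.symm⟩

lemma comap_lact_pointIdeal (g p : Fin n → kˣ) :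
    Ideal.comap (lact g) (pointIdeal (k := k) p) = pointIdeal (g * p) := by
  ext f
  simp [mem_pointIdeal, evalAt_lact]

section resL

variable {G : Subgroup (Fin n → kˣ)}

lemma mem_resL {I : Ideal (R k n)} {f : R k n} : f ∈ resL G I ↔ ∀ g ∈ G, lact g f ∈ I := by
  simp [resL]

lemma resL_le (G : Subgroup (Fin n → kˣ)) (I : Ideal (R k n)) : resL G I ≤ I := fun f hf => by
  simpa [lact_one] using mem_resL.mp hf 1 G.one_mem

lemma resL_ne_top {I : Ideal (R k n)} (hI : I ≠ ⊤) : resL G I ≠ ⊤ :=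
  ne_top_of_le_ne_top hI (resL_le G I)

lemma isGIdealL_resL (G : Subgroup (Fin n → kˣ)) (I : Ideal (R k n)) : IsGIdealL G (resL G I) := by
  intro g hg
  ext f
  simp only [Ideal.mem_comap, mem_resL, lact_lact, mul_comm _ g]
  exact Subgroup.forall_mem_mul_left_iff (P := fun g => lact g f ∈ I) hg

lemma resL_comap_lact {g : Fin n → kˣ} (hg : g ∈ G) (I : Ideal (R k n)) :
    resL G (Ideal.comap (lact g) I) = resL G I := by
  ext f
  simp only [Ideal.mem_comap, mem_resL, lact_lact]
  exact Subgroup.forall_mem_mul_left_iff (P := fun g => lact g f ∈ I) hg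

lemma le_resL_of_isGIdealL {I J : Ideal (R k n)} (hJ : IsGIdealL G J) (hJI : J ≤ I) :
    J ≤ resL G I := fun f hf =>
  mem_resL.mpr fun g hg => hJI (by rwa [← Ideal.mem_comap, hJ g hg])

lemma exists_le_resL_pointIdeal [IsAlgClosed k] {J : Ideal (R k n)} (hJ : IsGIdealL G J)
    (hJ_ne : J ≠ ⊤) : ∃ q : Fin n → kˣ, J ≤ resL G (pointIdeal q) := by
  obtain ⟨M, hM, hJM⟩ := Ideal.exists_le_maximal J hJ_ne
  obtain ⟨q, rfl⟩ := exists_eq_pointIdeal M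
  exact ⟨q, le_resL_of_isGIdealL hJ hJM⟩

lemma mem_resL_pointIdeal {p : Fin n → kˣ} {f : R k n} :
    f ∈ resL G (pointIdeal p) ↔ ∀ g ∈ G, evalAt (g * p) f = 0 := by
  simp [mem_resL, mem_pointIdeal, evalAt_lact]

end resL

def zariskiClosure (G : Subgroup (Fin n → kˣ)) : Subgroup (Fin n → kˣ) where
  carrier := {x | ∀ f : R k n, (∀ g ∈ G, evalAt g f = 0) → evalAt x f = 0}
  one_mem' f hf := hf 1 G.one_mem
  mul_mem' {x y} hx hy f hf := by
    have hfy : ∀ g ∈ G, evalAt g (lact y f) = 0 := fun g hg => by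
      rw [evalAt_lact, mul_comm, ← evalAt_lact]
      exact hy _ fun g' hg' => by rw [evalAt_lact]; exact hf _ (G.mul_mem hg hg')
    simpa [evalAt_lact, mul_comm] using hx _ hfy
  inv_mem' {x} hx f hf := by
    simpa [evalAt_invAut] using hx (invAut k n f) fun g hg => by
      simpa [evalAt_invAut] using hf g⁻¹ (G.inv_mem hg)

section zariskiClosure

variable {G : Subgroup (Fin n → kˣ)}

lemma le_zariskiClosure : G ≤ zariskiClosure G := fun g hg _ hf => hf g hg

lemma evalAt_mul_eq_zero_of_mem_zariskiClosure {x p : Fin n → kˣ} (hx : x ∈ zariskiClosure G)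
    {f : R k n} (hf : ∀ g ∈ G, evalAt (g * p) f = 0) : evalAt (x * p) f = 0 := by
  simpa [evalAt_lact, mul_comm] using hx (lact p f) fun g hg => by
    simpa [evalAt_lact, mul_comm] using hf g hg

lemma resL_zariskiClosure_pointIdeal (p : Fin n → kˣ) :
    resL (zariskiClosure G) (pointIdeal p) = resL G (pointIdeal p) := by
  ext f
  simp only [mem_resL_pointIdeal]
  exact ⟨fun hf g hg => hf g (le_zariskiClosure hg),
    fun hf x hx => evalAt_mul_eq_zero_of_mem_zariskiClosure hx hf⟩

lemma mul_inv_mem_zariskiClosure_of_resL_le {p q : Fin n → kˣ}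
    (h : resL G (pointIdeal p) ≤ pointIdeal q) : q * p⁻¹ ∈ zariskiClosure G := by
  intro f hf
  have : lact p⁻¹ f ∈ resL G (pointIdeal p) :=
    mem_resL_pointIdeal.mpr fun g hg => by simpa [evalAt_lact] using hf g hg
  simpa [mem_pointIdeal, evalAt_lact, mul_comm] using h this

lemma resL_pointIdeal_eq_of_le {p q : Fin n → kˣ} (h : resL G (pointIdeal p) ≤ pointIdeal q) :
    resL G (pointIdeal p) = resL G (pointIdeal q) := by
  rw [← resL_zariskiClosure_pointIdeal, ← resL_zariskiClosure_pointIdeal q,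
    ← inv_mul_cancel_right q p, ← comap_lact_pointIdeal,
    resL_comap_lact (mul_inv_mem_zariskiClosure_of_resL_le h)]

end zariskiClosure

noncomputable def toLaurent (k : Type*) [Field k] (n : ℕ) : MvPolynomial (Fin n) k →ₐ[k] R k n :=
  MvPolynomial.aeval fun i => single (Pi.single i 1) 1

lemma evalAt_toLaurent (p : Fin n → kˣ) (f : MvPolynomial (Fin n) k) :
    evalAt p (toLaurent k n f) = MvPolynomial.eval (fun i => (p i : k)) f := by
  suffices (evalAt p).comp (toLaurent k n) = MvPolynomial.aeval fun i => (p i : k) by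
    simpa [MvPolynomial.coe_aeval_eq_eval] using DFunLike.congr_fun this f
  refine MvPolynomial.algHom_ext fun i => ?_
  simp [toLaurent, evalAt_single, powChar_single]

lemma zariskiClosure_le_of_eq_zeroLocus {G : Subgroup (Fin n → kˣ)}
    {E : Set (MvPolynomial (Fin n) k)}
    (hE : ∀ h : Fin n → kˣ, h ∈ G ↔ ∀ f ∈ E, MvPolynomial.eval (fun i => (h i : k)) f = 0) :
    zariskiClosure G ≤ G := fun x hx => (hE x).mpr fun f hf => by
  simpa [evalAt_toLaurent] using hx (toLaurent k n f) fun g hg => by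
    simpa [evalAt_toLaurent] using (hE g).mp hg f hf

variable [IsAlgClosed k] (G : Subgroup (Fin n → kˣ))

theorem setOf_resL_of_isMaximal_eq :
    {Q : Ideal (R k n) | ∃ M : Ideal (R k n), M.IsMaximal ∧ Q = resL G M}
      = {Q | IsGIdealL G Q ∧ Q ≠ ⊤ ∧ ∀ J, IsGIdealL G J → J ≠ ⊤ → Q ≤ J → J = Q} := by
  ext Q
  constructor
  · rintro ⟨M, hM, rfl⟩
    obtain ⟨p, rfl⟩ := exists_eq_pointIdeal M
    refine ⟨isGIdealL_resL G _, resL_ne_top hM.ne_top, fun J hJ hJ_ne hle => ?_⟩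
    obtain ⟨q, hJq⟩ := exists_le_resL_pointIdeal hJ hJ_ne
    have := resL_pointIdeal_eq_of_le (hle.trans (hJq.trans (resL_le G _)))
    exact le_antisymm (this ▸ hJq) hle
  · rintro ⟨hQ, hQ_ne, hQ_max⟩
    obtain ⟨q, hQq⟩ := exists_le_resL_pointIdeal hQ hQ_ne
    exact ⟨pointIdeal q, pointIdeal_isMaximal q,
      (hQ_max _ (isGIdealL_resL G _) (resL_ne_top (pointIdeal_isMaximal q).ne_top) hQq).symm⟩

theorem resL_eq_resL_iff_exists_comap_lact {E : Set (MvPolynomial (Fin n) k)}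
    (hE : ∀ h : Fin n → kˣ, h ∈ G ↔ ∀ f ∈ E, MvPolynomial.eval (fun i => (h i : k)) f = 0)
    {M M' : Ideal (R k n)} (hM : M.IsMaximal) (hM' : M'.IsMaximal) :
    resL G M = resL G M' ↔ ∃ g ∈ G, M' = Ideal.comap (lact g) M := by
  obtain ⟨p, rfl⟩ := exists_eq_pointIdeal M
  constructor
  · intro h
    obtain ⟨q, rfl⟩ := exists_eq_pointIdeal M'
    have hle : resL G (pointIdeal p) ≤ pointIdeal q := h ▸ resL_le G _
    refine ⟨q * p⁻¹,
      zariskiClosure_le_of_eq_zeroLocus hE (mul_inv_mem_zariskiClosure_of_resL_le hle), ?_⟩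
    rw [comap_lact_pointIdeal, inv_mul_cancel_right]
  · rintro ⟨g, hg, rfl⟩
    exact (resL_comap_lact hg _).symm

end LaurentTorus

open LaurentTorus in
/-- Proposition 1.13: for a subgroup `G` of the torus `H = (kˣ)ⁿ` acting on
the Laurent polynomial ring `R = k[y₁^{±1},…,yₙ^{±1}]` (`k` algebraically closed):
(a) `{(M : G) : M ∈ max R} = G-max R`;
(b) if `G` is Zariski closed in `H`, the fibers of `M ↦ (M : G)` on `max R` are exactly
the `G`-orbits. -/
theorem stmt_7 {k : Type*} [Field k] [IsAlgClosed k] {n : ℕ}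
    (G : Subgroup (Fin n → kˣ)) :
    -- (a)
    ({Q : Ideal (AddMonoidAlgebra k (Fin n → ℤ)) |
        ∃ M : Ideal (AddMonoidAlgebra k (Fin n → ℤ)), M.IsMaximal ∧ Q = resL G M}
      = {Q : Ideal (AddMonoidAlgebra k (Fin n → ℤ)) |
          IsGIdealL G Q ∧ Q ≠ ⊤ ∧ ∀ J, IsGIdealL G J → J ≠ ⊤ → Q ≤ J → J = Q}) ∧
    -- (b)
    ((∃ E : Set (MvPolynomial (Fin n) k), ∀ h : Fin n → kˣ,
        h ∈ G ↔ ∀ f ∈ E, MvPolynomial.eval (fun i => (h i : k)) f = 0) →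
      ∀ M M' : Ideal (AddMonoidAlgebra k (Fin n → ℤ)), M.IsMaximal → M'.IsMaximal →
        (resL G M = resL G M' ↔ ∃ g ∈ G, M' = Ideal.comap (lact g) M)) :=
  ⟨setOf_resL_of_isMaximal_eq G,
    fun ⟨_, hE⟩ _ _ hM hM' => resL_eq_resL_iff_exists_comap_lact G hE hM hM'⟩
end

section
/- 𝒢-spec R satisfies: (a) for every w ∈ W and every prime ideal P ∈ spec_w R, the ideal (P : G_w) is a 𝒢-prime ideal contained in P that contains every 𝒢-semiprime ideal of R contained in P; (b) if Q ∈ 𝒢-spec_w R and P is a prime ideal of R minimal over Q, then P ∈ spec_w R and Q = (P : G_w). -/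
open MvPolynomial

/-- The action of `h ∈ (kˣ)ⁿ` on `k[y₁,…,yₙ]` by `yᵢ ↦ hᵢ yᵢ`. -/
noncomputable def tact {k : Type*} [CommSemiring k] {n : ℕ} (h : Fin n → kˣ) :
    MvPolynomial (Fin n) k →ₐ[k] MvPolynomial (Fin n) k :=
  aeval fun i => (h i : k) • X i

/-- `(I : G) = ⋂_{g ∈ G} g(I)` for a subgroup `G` of the torus `(kˣ)ⁿ`. -/
noncomputable def resT {k : Type*} [CommSemiring k] {n : ℕ} (G : Subgroup (Fin n → kˣ))
    (I : Ideal (MvPolynomial (Fin n) k)) : Ideal (MvPolynomial (Fin n) k) :=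
  ⨅ g ∈ G, Ideal.comap (tact g) I

/-- `spec_w R`: primes `P` with `P ∩ {y₁,…,yₙ} = {yᵢ : i ∈ w}`. -/
def specW (k : Type*) [CommSemiring k] {n : ℕ} (w : Set (Fin n)) :
    Set (Ideal (MvPolynomial (Fin n) k)) :=
  {P | P.IsPrime ∧ ∀ i, X i ∈ P ↔ i ∈ w}

/-- `max_w R = max R ∩ spec_w R`. -/
def maxW (k : Type*) [CommSemiring k] {n : ℕ} (w : Set (Fin n)) :
    Set (Ideal (MvPolynomial (Fin n) k)) :=
  {M | M.IsMaximal ∧ ∀ i, X i ∈ M ↔ i ∈ w}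

/-- `𝒢-spec_w R = {(P : G_w) : P ∈ spec_w R}`. -/
def GspecW {k : Type*} [CommSemiring k] {n : ℕ}
    (G : Set (Fin n) → Subgroup (Fin n → kˣ)) (w : Set (Fin n)) :
    Set (Ideal (MvPolynomial (Fin n) k)) :=
  {Q | ∃ P ∈ specW k w, Q = resT (G w) P}

/-- `𝒢-spec R`, the set of `𝒢`-prime ideals. -/
def GspecAll {k : Type*} [CommSemiring k] {n : ℕ}
    (G : Set (Fin n) → Subgroup (Fin n → kˣ)) :
    Set (Ideal (MvPolynomial (Fin n) k)) :=
  ⋃ w, GspecW G w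

/-- `𝒢`-semiprime ideals: intersections of collections of `𝒢`-prime ideals. -/
def GSemiprime {k : Type*} [CommSemiring k] {n : ℕ}
    (G : Set (Fin n) → Subgroup (Fin n → kˣ))
    (J : Ideal (MvPolynomial (Fin n) k)) : Prop :=
  ∃ T ⊆ GspecAll G, J = sInf T

/-- `𝒢-max_w R = {(M : G_w) : M ∈ max_w R}`. -/
def GmaxW {k : Type*} [CommSemiring k] {n : ℕ}
    (G : Set (Fin n) → Subgroup (Fin n → kˣ)) (w : Set (Fin n)) :
    Set (Ideal (MvPolynomial (Fin n) k)) :=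
  {Q | ∃ M ∈ maxW k w, Q = resT (G w) M}

/-- `𝒢-max R`. -/
def GmaxAll {k : Type*} [CommSemiring k] {n : ℕ}
    (G : Set (Fin n) → Subgroup (Fin n → kˣ)) :
    Set (Ideal (MvPolynomial (Fin n) k)) :=
  ⋃ w, GmaxW G w

/-- `P ↦ (P : 𝒢)`, i.e. `(P : G_w)` where `w = {i : yᵢ ∈ P}`. -/
noncomputable def Gquot {k : Type*} [CommSemiring k] {n : ℕ}
    (G : Set (Fin n) → Subgroup (Fin n → kˣ))
    (P : Ideal (MvPolynomial (Fin n) k)) : Ideal (MvPolynomial (Fin n) k) :=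
  resT (G {i | X i ∈ P}) P

/-!
(a) A `𝒢`-semiprime ideal `J = ⋂ T` below the prime `P` splits into the finitely many pieces
`⋂ (T ∩ 𝒢-spec_v R)`, so one of them lies in `P`. That piece is `G_v`-stable and contains `yᵢ`
for `i ∈ v`; hence `v ⊆ w` and it lies in `(P : G_v) ⊆ (P : G_w)`.

(b) `(P₀ : G_w) = ⋂_g g⁻¹(P₀)` is an intersection of primes, so in the noetherian ring `R` a prime
`P` minimal over it lies in one of them, `g₀⁻¹(P₀)`. This pins down which `yᵢ` lie in `P`, and
`(P : G_w) ⊆ (g₀⁻¹(P₀) : G_w) = (P₀ : G_w) ⊆ (P : G_w)`.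
-/

theorem Ideal.exists_le_of_mem_minimalPrimes_iInf {R : Type*} [CommSemiring R]
    [IsNoetherianRing R] {ι : Sort*} {p : ι → Ideal R} (hp : ∀ i, (p i).IsPrime)
    {P : Ideal R} (hP : P ∈ (⨅ i, p i).minimalPrimes) : ∃ i, P ≤ p i := by
  classical
  let s := ((⨅ i, p i).finite_minimalPrimes_of_isNoetherianRing R).toFinset.filter
    fun M => ∃ i, M ≤ p i
  have hs : s.inf id ≤ P := by
    refine le_trans (le_iInf fun i => ?_) hP.1.2
    have := hp i
    obtain ⟨M, hM, hMp⟩ := Ideal.exists_minimalPrimes_le (iInf_le p i)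
    exact (Finset.inf_le (by simpa [s] using ⟨hM, i, hMp⟩)).trans hMp
  obtain ⟨M, hMs, hMP⟩ := hP.1.1.inf_le'.mp hs
  obtain ⟨hM, i, hMp⟩ := Finset.mem_filter.mp hMs
  exact ⟨i, (hP.2 ((Set.Finite.mem_toFinset _).mp hM).1 hMP).trans hMp⟩

section Torus

variable {k : Type*} [CommSemiring k] {n : ℕ}

lemma tact_X (g : Fin n → kˣ) (i : Fin n) : tact (k := k) g (X i) = (g i : k) • X i := by
  simp [tact]

lemma tact_tact (g h : Fin n → kˣ) (x : MvPolynomial (Fin n) k) :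
    tact g (tact h x) = tact (g * h) x := by
  rw [← AlgHom.comp_apply]
  congr 1
  refine MvPolynomial.algHom_ext fun i => ?_
  simp [tact, smul_smul, mul_comm]

lemma tact_one : tact (k := k) (1 : Fin n → kˣ) = AlgHom.id k (MvPolynomial (Fin n) k) :=
  MvPolynomial.algHom_ext fun i => by simp [tact]

lemma X_mem_comap_tact_iff {I : Ideal (MvPolynomial (Fin n) k)} (g : Fin n → kˣ) (i : Fin n) :
    X i ∈ I.comap (tact g) ↔ X i ∈ I := by
  rw [Ideal.mem_comap, tact_X, ← Units.smul_def]
  exact Submodule.smul_mem_iff' I (g i)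

variable {G : Subgroup (Fin n → kˣ)} {I J : Ideal (MvPolynomial (Fin n) k)}

lemma mem_resT {x : MvPolynomial (Fin n) k} : x ∈ resT G I ↔ ∀ g ∈ G, tact g x ∈ I := by
  simp [resT]

lemma resT_eq_iInf_comap : resT G I = ⨅ g : G, I.comap (tact (g : Fin n → kˣ)) := by
  rw [resT, iInf_subtype]

lemma resT_le_self : resT G I ≤ I := fun x hx => by
  simpa [tact_one] using mem_resT.mp hx 1 G.one_mem

lemma resT_mono (h : I ≤ J) : resT G I ≤ resT G J := fun _ hx =>
  mem_resT.mpr fun g hg => h (mem_resT.mp hx g hg)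

lemma le_resT_of_le_comap (hJ : ∀ g ∈ G, J ≤ J.comap (tact g)) (hJI : J ≤ I) :
    J ≤ resT G I := fun _ hx =>
  mem_resT.mpr fun g hg => hJI (hJ g hg hx)

lemma resT_le_comap_tact {h : Fin n → kˣ} (hh : h ∈ G) :
    resT G I ≤ (resT G I).comap (tact h) := fun x hx =>
  mem_resT.mpr fun g hg => by
    rw [tact_tact]
    exact mem_resT.mp hx _ (G.mul_mem hg hh)

lemma resT_comap_tact {g₀ : Fin n → kˣ} (hg₀ : g₀ ∈ G) :
    resT G (I.comap (tact g₀)) = resT G I := by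
  ext x
  simp only [mem_resT, Ideal.mem_comap, tact_tact]
  refine ⟨fun hx g hg => ?_, fun hx g hg => hx _ (G.mul_mem hg₀ hg)⟩
  simpa using hx (g₀⁻¹ * g) (G.mul_mem (G.inv_mem hg₀) hg)

lemma X_mem_resT_iff (i : Fin n) : X i ∈ resT G I ↔ X i ∈ I := by
  simp only [mem_resT, ← Ideal.mem_comap, X_mem_comap_tact_iff]
  exact ⟨fun h => h 1 G.one_mem, fun h _ _ => h⟩

end Torus

section GPrime

variable {k : Type*} [CommSemiring k] {n : ℕ} {G : Set (Fin n) → Subgroup (Fin n → kˣ)}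
  {v w : Set (Fin n)} {Q P : Ideal (MvPolynomial (Fin n) k)}

lemma X_mem_iff_of_mem_GspecW (hQ : Q ∈ GspecW G v) (i : Fin n) : X i ∈ Q ↔ i ∈ v := by
  obtain ⟨P, hP, rfl⟩ := hQ
  rw [X_mem_resT_iff, hP.2]

lemma le_comap_tact_of_mem_GspecW (hQ : Q ∈ GspecW G v) {g : Fin n → kˣ} (hg : g ∈ G v) :
    Q ≤ Q.comap (tact g) := by
  obtain ⟨P, -, rfl⟩ := hQ
  exact resT_le_comap_tact hg

lemma sInf_le_resT_of_subset_GspecW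
    (hcompat : ∀ v w : Set (Fin n), v ⊆ w → ∀ P ∈ specW k w, resT (G v) P ≤ resT (G w) P)
    {S : Set (Ideal (MvPolynomial (Fin n) k))} (hS : S ⊆ GspecW G v) (hP : P ∈ specW k w)
    (hSP : sInf S ≤ P) : sInf S ≤ resT (G w) P := by
  have hvw : v ⊆ w := fun i hi =>
    (hP.2 i).mp (hSP (Ideal.mem_sInf.mpr fun {_} hQ => (X_mem_iff_of_mem_GspecW (hS hQ) i).mpr hi))
  have hstable : ∀ g ∈ G v, sInf S ≤ (sInf S).comap (tact g) := fun g hg => by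
    rw [Ideal.comap_sInf]
    exact le_iInf₂ fun Q hQ => (sInf_le hQ).trans (le_comap_tact_of_mem_GspecW (hS hQ) hg)
  exact (le_resT_of_le_comap hstable hSP).trans (hcompat v w hvw P hP)

lemma GSemiprime.le_resT
    (hcompat : ∀ v w : Set (Fin n), v ⊆ w → ∀ P ∈ specW k w, resT (G v) P ≤ resT (G w) P)
    {J : Ideal (MvPolynomial (Fin n) k)} (hJ : GSemiprime G J) (hP : P ∈ specW k w)
    (hJP : J ≤ P) : J ≤ resT (G w) P := by
  obtain ⟨T, hT, rfl⟩ := hJ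
  have hsplit : (Finset.univ.inf fun v => sInf (T ∩ GspecW G v)) ≤ sInf T := le_sInf fun Q hQ => by
    obtain ⟨v, hv⟩ := Set.mem_iUnion.mp (hT hQ)
    exact (Finset.inf_le (Finset.mem_univ v)).trans (sInf_le ⟨hQ, hv⟩)
  obtain ⟨v, -, hvP⟩ := hP.1.inf_le'.mp (hsplit.trans hJP)
  exact (sInf_le_sInf Set.inter_subset_left).trans
    (sInf_le_resT_of_subset_GspecW hcompat Set.inter_subset_right hP hvP)

end GPrime

lemma mem_specW_and_eq_resT_of_mem_minimalPrimes {k : Type*} [CommRing k] [IsNoetherianRing k]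
    {n : ℕ} {G : Set (Fin n) → Subgroup (Fin n → kˣ)} {w : Set (Fin n)}
    {Q P : Ideal (MvPolynomial (Fin n) k)} (hQ : Q ∈ GspecW G w) (hP : P ∈ Q.minimalPrimes) : P ∈ specW k w ∧ Q = resT (G w) P := by
  obtain ⟨P₀, hP₀, rfl⟩ := hQ
  have := hP₀.1
  obtain ⟨g₀, hg₀⟩ := Ideal.exists_le_of_mem_minimalPrimes_iInf (fun _ => inferInstance)
    (resT_eq_iInf_comap (G := G w) (I := P₀) ▸ hP)
  have hX : ∀ i, X i ∈ P ↔ i ∈ w := fun i =>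
    ⟨fun h => (hP₀.2 i).mp ((X_mem_comap_tact_iff _ i).mp (hg₀ h)),
      fun hi => hP.1.2 ((X_mem_iff_of_mem_GspecW ⟨P₀, hP₀, rfl⟩ i).mpr hi)⟩
  refine ⟨⟨hP.1.1, hX⟩, le_antisymm (le_resT_of_le_comap (fun _ => resT_le_comap_tact) hP.1.2) ?_⟩
  calc resT (G w) P ≤ resT (G w) (P₀.comap (tact (g₀ : Fin n → kˣ))) := resT_mono hg₀
    _ = resT (G w) P₀ := resT_comap_tact g₀.2

/-- Lemma 2.3: `𝒢-spec R` satisfies the axioms (1.1): (a) for `P ∈ spec_w R`,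
`(P : G_w)` is a `𝒢`-prime ideal contained in `P` containing every `𝒢`-semiprime ideal
contained in `P`; (b) if `Q ∈ 𝒢-spec_w R` and `P` is a prime minimal over `Q`, then
`P ∈ spec_w R` and `Q = (P : G_w)`. -/
theorem stmt_8 {k : Type*} [Field k] {n : ℕ}
    (G : Set (Fin n) → Subgroup (Fin n → kˣ))
    (hcompat : ∀ v w : Set (Fin n), v ⊆ w → ∀ P ∈ specW k w,
      resT (G v) P ≤ resT (G w) P) :
    (∀ w : Set (Fin n), ∀ P ∈ specW k w,
        resT (G w) P ∈ GspecAll G ∧ resT (G w) P ≤ P ∧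
        ∀ J : Ideal (MvPolynomial (Fin n) k), GSemiprime G J → J ≤ P → J ≤ resT (G w) P) ∧
    (∀ w : Set (Fin n), ∀ Q ∈ GspecW G w, ∀ P : Ideal (MvPolynomial (Fin n) k),
        P.IsPrime → Q ≤ P →
        (∀ P' : Ideal (MvPolynomial (Fin n) k), P'.IsPrime → Q ≤ P' → P' ≤ P → P' = P) →
        P ∈ specW k w ∧ Q = resT (G w) P) := by
  refine ⟨fun w P hP => ⟨Set.mem_iUnion.mpr ⟨w, P, hP, rfl⟩, resT_le_self,
    fun J hJ hJP => GSemiprime.le_resT hcompat hJ hP hJP⟩, ?_⟩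
  intro w Q hQ P hPprime hQP hmin
  exact mem_specW_and_eq_resT_of_mem_minimalPrimes hQ
    ⟨⟨hPprime, hQP⟩, fun P' hP' hP'P => (hmin P' hP'.1 hP'.2 hP'P).ge⟩
end
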